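/- arXiv:2401.03820 — 3 statements merged into one kernel-verified Lean document; each statement's English description precedes it below -/
import Mathlib

section
/- Let Σ₁ = λU₁U₁ᵀ + σ²I_p and Σ₂ = λU₂U₂ᵀ + σ²I_p where U₁, U₂ ∈ O_{p,r} (p×r matrices with orthonormal columns) and λ, σ² > 0. Then the Kullback–Leibler divergence satisfies KL(N(0,Σ₁) ‖ N(0,Σ₂)) = (1/2)(λ/σ² − λ/(λ+σ²))·(r − tr(U₂U₂ᵀU₁U₁ᵀ)). -/
open Matrix MeasureTheory

/-- The density of the centered multivariate Gaussian `N(0, S)` (for `S` positive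
definite) with respect to Lebesgue measure on `ℝ^p`. -/
noncomputable def gaussianDensity {p : ℕ} (S : Matrix (Fin p) (Fin p) ℝ)
    (x : EuclideanSpace ℝ (Fin p)) : ℝ :=
  ((2 * Real.pi) ^ p * S.det) ^ (-(1 : ℝ) / 2) *
    Real.exp (-(1 / 2) * ((fun i => x i) ⬝ᵥ S⁻¹.mulVec fun i => x i))

/-- The centered multivariate Gaussian measure `N(0, S)` on `ℝ^p`. -/
noncomputable def gaussianMeasure {p : ℕ} (S : Matrix (Fin p) (Fin p) ℝ) :
    Measure (EuclideanSpace ℝ (Fin p)) :=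
  volume.withDensity fun x => ENNReal.ofReal (gaussianDensity S x)

/-- The Kullback–Leibler divergence `KL(P‖Q) = ∫ log(dP/dQ) dP`. -/
noncomputable def klDiv {α : Type*} [MeasurableSpace α] (P Q : Measure α) : ℝ :=
  ∫ x, Real.log (P.rnDeriv Q x).toReal ∂P

open Real ENNReal

section Aux

variable {p r : ℕ}

lemma mul_aux {n : Type*} [Fintype n] [DecidableEq n] (A : Matrix n n ℝ) (hA : A * A = A)
    (α β γ δ : ℝ) :
    (α • A + β • (1 : Matrix n n ℝ)) * (γ • A + δ • 1) =
      (α * γ + α * δ + β * γ) • A + (β * δ) • 1 := by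
  simp only [Matrix.add_mul, Matrix.mul_add, smul_mul_assoc, mul_smul_comm, hA,
    Matrix.mul_one, Matrix.one_mul, smul_smul, add_smul]
  module

lemma proj_idem (U : Matrix (Fin p) (Fin r) ℝ) (h : Uᵀ * U = 1) :
    (U * Uᵀ) * (U * Uᵀ) = U * Uᵀ := by
  rw [Matrix.mul_assoc, ← Matrix.mul_assoc Uᵀ, h, Matrix.one_mul]

lemma trace_proj (U : Matrix (Fin p) (Fin r) ℝ) (h : Uᵀ * U = 1) :
    (U * Uᵀ).trace = (r : ℝ) := by
  rw [trace_mul_comm, h, trace_one]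
  simp

lemma sigma_det (lam s2 : ℝ) (hs2 : s2 ≠ 0) (U : Matrix (Fin p) (Fin r) ℝ) (h : Uᵀ * U = 1) :
    (lam • (U * Uᵀ) + s2 • (1 : Matrix (Fin p) (Fin p) ℝ)).det
      = s2 ^ p * (1 + lam / s2) ^ r := by
  have h1 : lam • (U * Uᵀ) + s2 • (1 : Matrix (Fin p) (Fin p) ℝ)
      = s2 • ((1 : Matrix (Fin p) (Fin p) ℝ) + U * ((lam / s2) • Uᵀ)) := by
    rw [smul_add, Matrix.mul_smul, smul_smul, mul_div_cancel₀ _ hs2, add_comm]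
  have h2 : ((lam / s2) • Uᵀ) * U = (lam / s2) • (1 : Matrix (Fin r) (Fin r) ℝ) := by
    rw [Matrix.smul_mul, h]
  have h3 : (1 : Matrix (Fin r) (Fin r) ℝ) + (lam / s2) • 1 = (1 + lam / s2) • 1 := by
    rw [add_smul, one_smul]
  rw [h1, Matrix.det_smul, det_one_add_mul_comm, h2, h3, Matrix.det_smul, det_one, mul_one]
  simp [Fintype.card_fin]

lemma sigma_inv (lam s2 : ℝ) (hlam : 0 < lam) (hs2 : 0 < s2)
    (U : Matrix (Fin p) (Fin r) ℝ) (h : Uᵀ * U = 1) :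
    (lam • (U * Uᵀ) + s2 • (1 : Matrix (Fin p) (Fin p) ℝ))⁻¹
      = (-(lam / (s2 * (lam + s2)))) • (U * Uᵀ) + s2⁻¹ • 1 := by
  apply Matrix.inv_eq_right_inv
  rw [mul_aux _ (proj_idem U h)]
  have h0 : lam * -(lam / (s2 * (lam + s2))) + lam * s2⁻¹ + s2 * -(lam / (s2 * (lam + s2))) = 0 := by
    field_simp
    ring
  rw [h0, zero_smul, zero_add, mul_inv_cancel₀ (ne_of_gt hs2), one_smul]

lemma exists_sqrt (lam s2 : ℝ) (hlam : 0 < lam) (hs2 : 0 < s2)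
    (U : Matrix (Fin p) (Fin r) ℝ) (h : Uᵀ * U = 1) :
    ∃ T : Matrix (Fin p) (Fin p) ℝ, Tᵀ = T ∧
      T * T = lam • (U * Uᵀ) + s2 • (1 : Matrix (Fin p) (Fin p) ℝ) ∧ T.det ≠ 0 ∧
      Tᵀ * (lam • (U * Uᵀ) + s2 • (1 : Matrix (Fin p) (Fin p) ℝ))⁻¹ * T = 1 := by
  set A := U * Uᵀ with hA
  have hAA : A * A = A := proj_idem U h
  set s : ℝ := Real.sqrt s2 with hs
  set a : ℝ := Real.sqrt (lam + s2) - s with ha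
  have hspos : 0 < s := Real.sqrt_pos.mpr hs2
  have has : a + s = Real.sqrt (lam + s2) := by ring
  have haspos : 0 < a + s := by rw [has]; exact Real.sqrt_pos.mpr (by linarith)
  set b : ℝ := -a / (s * (a + s)) with hb
  have hsne : s ≠ 0 := ne_of_gt hspos
  have hasne : a + s ≠ 0 := ne_of_gt haspos
  have hcoef : a * b + a * s⁻¹ + s * b = 0 := by
    rw [hb]; field_simp; ring
  have hcoef' : b * a + b * s + s⁻¹ * a = 0 := by
    rw [hb]; field_simp; ring
  have hTT : (a • A + s • (1 : Matrix (Fin p) (Fin p) ℝ)) * (a • A + s • 1)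
      = lam • A + s2 • 1 := by
    rw [mul_aux _ hAA]
    have h1 : a * a + a * s + s * a = lam := by
      have : (a + s) ^ 2 = lam + s2 := by
        rw [has, Real.sq_sqrt (by linarith)]
      nlinarith [Real.sq_sqrt hs2.le]
    have h2 : s * s = s2 := Real.mul_self_sqrt hs2.le
    rw [h1, h2]
  have hTi : (a • A + s • (1 : Matrix (Fin p) (Fin p) ℝ)) * (b • A + s⁻¹ • 1) = 1 := by
    rw [mul_aux _ hAA, hcoef, zero_smul, zero_add, mul_inv_cancel₀ hsne, one_smul]
  have hTi' : (b • A + s⁻¹ • (1 : Matrix (Fin p) (Fin p) ℝ)) * (a • A + s • 1) = 1 := by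
    rw [mul_aux _ hAA, hcoef', zero_smul, zero_add, inv_mul_cancel₀ hsne, one_smul]
  have hSinv : (lam • A + s2 • (1 : Matrix (Fin p) (Fin p) ℝ))⁻¹
      = (b • A + s⁻¹ • 1) * (b • A + s⁻¹ • 1) := by
    apply Matrix.inv_eq_right_inv
    rw [← hTT, Matrix.mul_assoc, ← Matrix.mul_assoc (a • A + s • 1) (b • A + s⁻¹ • 1),
      hTi, Matrix.one_mul, hTi]
  refine ⟨a • A + s • 1, ?_, ?_, ?_, ?_⟩
  · simp [Matrix.transpose_add, Matrix.transpose_smul, Matrix.transpose_mul,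
      Matrix.transpose_one, Matrix.transpose_transpose, hA]
  · exact hTT
  · exact (Matrix.isUnit_det_of_right_inverse hTi).ne_zero
  · have hTsymm : (a • A + s • (1 : Matrix (Fin p) (Fin p) ℝ))ᵀ = a • A + s • 1 := by
      simp [Matrix.transpose_add, Matrix.transpose_smul, Matrix.transpose_mul,
        Matrix.transpose_one, Matrix.transpose_transpose, hA]
    rw [hTsymm, hSinv, ← Matrix.mul_assoc, hTi, Matrix.one_mul]
    exact hTi'

lemma g1 : ∫ x : ℝ, Real.exp (-(1/2) * x ^ 2) = Real.sqrt (2 * π) := by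
  rw [integral_gaussian, show π / (1/2 : ℝ) = 2 * π by ring]

lemma g1_integrable : Integrable (fun x : ℝ => Real.exp (-(1/2) * x ^ 2)) := by
  simpa using integrable_exp_neg_mul_sq (by norm_num : (0:ℝ) < 1/2)

lemma godd_integrable : Integrable (fun x : ℝ => x * Real.exp (-(1/2) * x ^ 2)) := by
  simpa using integrable_mul_exp_neg_mul_sq (by norm_num : (0:ℝ) < 1/2)

lemma godd : ∫ x : ℝ, x * Real.exp (-(1/2) * x ^ 2) = 0 := by
  have h := integral_neg_eq_self (fun x : ℝ => x * Real.exp (-(1/2) * x ^ 2)) volume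
  have h2 : (fun x : ℝ => (-x) * Real.exp (-(1/2) * (-x) ^ 2))
      = fun x : ℝ => -(x * Real.exp (-(1/2) * x ^ 2)) := by
    funext x; rw [neg_sq]; ring
  rw [h2, integral_neg] at h
  linarith

lemma gsq_integrable : Integrable (fun x : ℝ => x ^ 2 * Real.exp (-(1/2) * x ^ 2)) := by
  have := integrable_rpow_mul_exp_neg_mul_sq (by norm_num : (0:ℝ) < 1/2)
    (by norm_num : (-1:ℝ) < 2)
  simpa [Real.rpow_natCast] using this

lemma gsq : ∫ x : ℝ, x ^ 2 * Real.exp (-(1/2) * x ^ 2) = Real.sqrt (2 * π) := by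
  have h0 : ∫ x : ℝ, x ^ 2 * Real.exp (-(1/2) * x ^ 2)
      = 2 * ∫ x in Set.Ioi (0:ℝ), x ^ 2 * Real.exp (-(1/2) * x ^ 2) := by
    rw [← integral_comp_abs (f := fun t : ℝ => t ^ 2 * Real.exp (-(1/2) * t ^ 2))]
    exact integral_congr_ae (Filter.Eventually.of_forall (fun x => by simp [sq_abs]))
  have h := integral_rpow_mul_exp_neg_mul_rpow (p := 2) (q := 2) (b := 1/2)
    (by norm_num) (by norm_num) (by norm_num)
  rw [show ∫ x in Set.Ioi (0:ℝ), x ^ (2:ℝ) * Real.exp (-(1/2) * x ^ (2:ℝ))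
      = ∫ x in Set.Ioi (0:ℝ), x ^ 2 * Real.exp (-(1/2) * x ^ 2) by
    refine setIntegral_congr_fun measurableSet_Ioi (fun x hx => ?_)
    rw [← Real.rpow_natCast x 2]; norm_num] at h
  rw [h0, h, show ((2:ℝ) + 1) / 2 = 1/2 + 1 by norm_num, Real.Gamma_add_one (by norm_num),
    Real.Gamma_one_half_eq]
  have h2 : ((1:ℝ)/2) ^ (-((2:ℝ)+1)/2) = 2 * Real.sqrt 2 := by
    rw [show (-((2:ℝ)+1)/2) = -(3/2 : ℝ) by norm_num,
      show ((1:ℝ)/2) = 2⁻¹ by norm_num, Real.inv_rpow (by norm_num), Real.rpow_neg (by norm_num),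
      inv_inv, show (3/2 : ℝ) = 1 + 1/2 by norm_num, Real.rpow_add (by norm_num), Real.rpow_one,
      ← Real.sqrt_eq_rpow]
  rw [h2, Real.sqrt_mul (by norm_num : (0:ℝ) ≤ 2) π]
  ring

noncomputable def hk (i j k : Fin p) : ℝ → ℝ := fun t =>
  (if k = i then t else 1) * (if k = j then t else 1) * Real.exp (-(1/2) * t ^ 2)

lemma he_sq : (fun t : ℝ => t * t * Real.exp (-(1/2) * t ^ 2))
    = fun t : ℝ => t ^ 2 * Real.exp (-(1/2) * t ^ 2) := by funext t; ring

lemma hk_integrable (i j k : Fin p) : Integrable (hk i j k) := by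
  unfold hk
  by_cases hi : k = i
  · subst hi
    by_cases hj : k = j
    · subst hj
      simp only [eq_self_iff_true, if_true]
      rw [he_sq]
      exact gsq_integrable
    · simp only [if_pos rfl, if_neg hj, mul_one]
      exact godd_integrable
  · by_cases hj : k = j
    · subst hj
      simp only [if_pos rfl, if_neg hi, one_mul]
      exact godd_integrable
    · simp only [if_neg hi, if_neg hj, one_mul]
      exact g1_integrable

lemma hk_int_ne (i j k : Fin p) (hij : i ≠ j) (hk_ : k = i) : ∫ t : ℝ, hk i j k t = 0 := by
  unfold hk
  subst hk_
  simp only [if_pos rfl, if_neg hij, mul_one]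
  exact godd

lemma hk_int_diag (i k : Fin p) : ∫ t : ℝ, hk i i k t = Real.sqrt (2 * π) := by
  unfold hk
  by_cases hi : k = i
  · subst hi
    simp only [eq_self_iff_true, if_true]
    rw [show (∫ t : ℝ, t * t * Real.exp (-(1/2) * t ^ 2))
        = ∫ t : ℝ, t ^ 2 * Real.exp (-(1/2) * t ^ 2) by
      exact congrArg _ he_sq]
    exact gsq
  · simp only [if_neg hi, one_mul]
    exact g1

lemma prod_hk (i j : Fin p) (y : Fin p → ℝ) :
    ∏ k, hk i j k (y k) = y i * y j * ∏ k, Real.exp (-(1/2) * (y k) ^ 2) := by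
  unfold hk
  rw [Finset.prod_mul_distrib, Finset.prod_mul_distrib]
  congr 1
  congr 1
  · simp [Finset.prod_ite_eq']
  · simp [Finset.prod_ite_eq']

lemma quad_rep (B : Matrix (Fin p) (Fin p) ℝ) (y : Fin p → ℝ) :
    (y ⬝ᵥ B.mulVec y) * ∏ k, Real.exp (-(1/2) * (y k) ^ 2)
      = ∑ i, ∑ j, B i j * ∏ k, hk i j k (y k) := by
  simp only [prod_hk, dotProduct, Matrix.mulVec, Finset.mul_sum, Finset.sum_mul]
  congr 1; funext i; congr 1; funext j; ring

lemma quad_integrable (B : Matrix (Fin p) (Fin p) ℝ) :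
    Integrable (fun y : Fin p → ℝ =>
      (y ⬝ᵥ B.mulVec y) * ∏ k, Real.exp (-(1/2) * (y k) ^ 2)) := by
  simp only [quad_rep]
  apply integrable_finset_sum
  intro i _
  apply integrable_finset_sum
  intro j _
  exact (Integrable.fintype_prod (fun k => hk_integrable i j k)).const_mul _

lemma quad_int (B : Matrix (Fin p) (Fin p) ℝ) :
    ∫ y : Fin p → ℝ, (y ⬝ᵥ B.mulVec y) * ∏ k, Real.exp (-(1/2) * (y k) ^ 2)
      = B.trace * Real.sqrt (2 * π) ^ p := by
  simp only [quad_rep]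
  erw [integral_finset_sum (μ := volume) _ (fun i _ => integrable_finset_sum _ (fun j _ =>
    (Integrable.fintype_prod (fun k => hk_integrable i j k)).const_mul _))]
  have key : ∀ i j : Fin p, ∫ y : Fin p → ℝ, B i j * ∏ k, hk i j k (y k)
      = if i = j then B i j * Real.sqrt (2 * π) ^ p else 0 := by
    intro i j
    erw [integral_const_mul, MeasureTheory.integral_fintype_prod_eq_prod (fun k => hk i j k)]
    by_cases hij : i = j
    · subst hij
      rw [if_pos rfl]
      congr 1
      rw [Finset.prod_congr rfl (fun k _ => hk_int_diag i k), Finset.prod_const]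
      simp
    · rw [if_neg hij, Finset.prod_eq_zero (Finset.mem_univ i) (hk_int_ne i j i hij rfl),
        mul_zero]
  calc ∑ i, ∫ y : Fin p → ℝ, ∑ j, B i j * ∏ k, hk i j k (y k)
      = ∑ i, ∑ j, ∫ y : Fin p → ℝ, B i j * ∏ k, hk i j k (y k) := by
        refine Finset.sum_congr rfl (fun i _ => ?_)
        exact integral_finset_sum _ (fun j _ =>
          (Integrable.fintype_prod (fun k => hk_integrable i j k)).const_mul _)
    _ = ∑ i, ∑ j, if i = j then B i j * Real.sqrt (2 * π) ^ p else 0 := by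
        simp only [key]
    _ = ∑ i, B i i * Real.sqrt (2 * π) ^ p := by
        refine Finset.sum_congr rfl (fun i _ => ?_)
        simp
    _ = B.trace * Real.sqrt (2 * π) ^ p := by
        rw [← Finset.sum_mul]; rfl

lemma exp_prod_integrable :
    Integrable (fun y : Fin p → ℝ => ∏ k, Real.exp (-(1/2) * (y k) ^ 2)) :=
  Integrable.fintype_prod (fun _ => g1_integrable)

lemma exp_prod_int :
    ∫ y : Fin p → ℝ, ∏ k, Real.exp (-(1/2) * (y k) ^ 2) = Real.sqrt (2 * π) ^ p := by
  erw [MeasureTheory.integral_fintype_prod_eq_pow (fun t : ℝ => Real.exp (-(1/2) * t ^ 2))]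
  rw [g1]
  simp

-- quadratic form composition
lemma quad_comp (M T : Matrix (Fin p) (Fin p) ℝ) (y : Fin p → ℝ) :
    (T.mulVec y) ⬝ᵥ M.mulVec (T.mulVec y) = y ⬝ᵥ ((Tᵀ * M * T).mulVec y) := by
  have hswap : T *ᵥ y = y ᵥ* Tᵀ := by rw [Matrix.vecMul_transpose]
  rw [Matrix.dotProduct_mulVec]
  nth_rewrite 1 [hswap]
  rw [Matrix.vecMul_vecMul, ← Matrix.dotProduct_mulVec, Matrix.mulVec_mulVec]

lemma cont_quad (M : Matrix (Fin p) (Fin p) ℝ) :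
    Continuous fun y : Fin p → ℝ => y ⬝ᵥ M.mulVec y := by
  have h : (fun y : Fin p → ℝ => y ⬝ᵥ M.mulVec y)
      = fun y => ∑ i, ∑ j, y i * (M i j * y j) := by
    funext y
    simp [dotProduct, Matrix.mulVec, Finset.mul_sum]
  rw [h]
  refine continuous_finset_sum _ (fun i _ => continuous_finset_sum _ (fun j _ => ?_))
  exact (continuous_apply i).mul (continuous_const.mul (continuous_apply j))

-- change of variables
lemma cv (T : Matrix (Fin p) (Fin p) ℝ) (hdet : T.det ≠ 0) (G : (Fin p → ℝ) → ℝ)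
    (hG : Continuous G) :
    ∫ y : Fin p → ℝ, G y = |T.det| * ∫ y : Fin p → ℝ, G (T.mulVec y) := by
  have hmap := Real.map_matrix_volume_pi_eq_smul_volume_pi hdet
  have hmeas : Measurable (Matrix.toLin' T) :=
    (LinearMap.continuous_on_pi _).measurable
  have h1 : ∫ y : Fin p → ℝ, G (T.mulVec y)
      = ∫ x, G x ∂(Measure.map (Matrix.toLin' T) volume) := by
    rw [integral_map hmeas.aemeasurable (hG.aestronglyMeasurable)]
    simp [Matrix.toLin'_apply]
  rw [h1, hmap, integral_smul_measure]
  rw [ENNReal.toReal_ofReal (by positivity)]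
  rw [abs_inv, smul_eq_mul, ← mul_assoc, mul_inv_cancel₀ (by simpa using hdet), one_mul]

lemma cv_integrable (T : Matrix (Fin p) (Fin p) ℝ) (hdet : T.det ≠ 0)
    (G : (Fin p → ℝ) → ℝ) (hG : Continuous G)
    (h : Integrable (fun y : Fin p → ℝ => G (T.mulVec y))) : Integrable G := by
  have hmap := Real.map_matrix_volume_pi_eq_smul_volume_pi hdet
  have hmeas : Measurable (Matrix.toLin' T) :=
    (LinearMap.continuous_on_pi _).measurable
  have h2 : Integrable G (Measure.map (Matrix.toLin' T) volume) := by
    rw [integrable_map_measure hG.aestronglyMeasurable hmeas.aemeasurable]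
    simp only [Function.comp_def, Matrix.toLin'_apply]
    exact h
  rw [hmap] at h2
  rw [← integrable_smul_measure (c := ENNReal.ofReal |T.det⁻¹|)
    (by simp [ENNReal.ofReal_eq_zero, abs_nonpos_iff, inv_eq_zero, hdet]) (by simp)]
  exact h2

noncomputable def dens (S : Matrix (Fin p) (Fin p) ℝ) (y : Fin p → ℝ) : ℝ :=
  ((2 * π) ^ p * S.det) ^ (-(1:ℝ)/2) * Real.exp (-(1/2) * (y ⬝ᵥ S⁻¹.mulVec y))

lemma sqrt_pow' (x : ℝ) (hx : 0 ≤ x) (n : ℕ) : Real.sqrt (x ^ n) = Real.sqrt x ^ n := by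
  induction n with
  | zero => simp
  | succ n ih => rw [pow_succ, pow_succ, Real.sqrt_mul (pow_nonneg hx n), ih]

lemma dens_cont (S : Matrix (Fin p) (Fin p) ℝ) : Continuous (dens S) := by
  unfold dens
  exact continuous_const.mul (Real.continuous_exp.comp
    (continuous_const.mul (cont_quad S⁻¹)))

lemma dens_comp (S T : Matrix (Fin p) (Fin p) ℝ) (hquad : Tᵀ * S⁻¹ * T = 1) (y : Fin p → ℝ) :
    dens S (T.mulVec y)
      = ((2 * π) ^ p * S.det) ^ (-(1:ℝ)/2) * ∏ k, Real.exp (-(1/2) * (y k) ^ 2) := by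
  unfold dens
  congr 1
  rw [quad_comp, hquad, Matrix.one_mulVec]
  have h1 : y ⬝ᵥ y = ∑ i, y i ^ 2 := by
    simp [dotProduct, pow_two]
  rw [h1, Finset.mul_sum, Real.exp_sum]

lemma dens_cst (S T : Matrix (Fin p) (Fin p) ℝ) (hTT : T * T = S) (hdet : T.det ≠ 0) :
    ((2 * π) ^ p * S.det) ^ (-(1:ℝ)/2) * (|T.det| * Real.sqrt (2 * π) ^ p) = 1 := by
  have hSdet : S.det = T.det ^ 2 := by rw [← hTT, Matrix.det_mul, sq]
  have hd2 : (0:ℝ) < T.det ^ 2 := lt_of_le_of_ne (sq_nonneg _) (Ne.symm (pow_ne_zero 2 hdet))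
  have h2pi : (0:ℝ) ≤ 2 * π := by positivity
  have h1 : (0:ℝ) < (2 * π) ^ p * T.det ^ 2 :=
    mul_pos (pow_pos (by positivity) p) hd2
  rw [hSdet, show (-(1:ℝ)/2) = -(1/2) by norm_num, Real.rpow_neg h1.le, ← Real.sqrt_eq_rpow,
    Real.sqrt_mul (pow_nonneg h2pi p), sqrt_pow' _ h2pi, Real.sqrt_sq_eq_abs]
  have hs : Real.sqrt (2 * π) ^ p ≠ 0 := pow_ne_zero _ (by positivity)
  field_simp

lemma dens_integrable (S T : Matrix (Fin p) (Fin p) ℝ) (hdet : T.det ≠ 0)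
    (hquad : Tᵀ * S⁻¹ * T = 1) : Integrable (dens S) := by
  apply cv_integrable T hdet _ (dens_cont S)
  have he : (fun y : Fin p → ℝ => dens S (T.mulVec y))
      = fun y => ((2 * π) ^ p * S.det) ^ (-(1:ℝ)/2) * ∏ k, Real.exp (-(1/2) * (y k) ^ 2) := by
    funext y; exact dens_comp S T hquad y
  rw [he]
  exact exp_prod_integrable.const_mul _

lemma dens_norm (S T : Matrix (Fin p) (Fin p) ℝ) (hTT : T * T = S) (hdet : T.det ≠ 0)
    (hquad : Tᵀ * S⁻¹ * T = 1) : ∫ y : Fin p → ℝ, dens S y = 1 := by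
  rw [cv T hdet _ (dens_cont S)]
  have he : (fun y : Fin p → ℝ => dens S (T.mulVec y))
      = fun y => ((2 * π) ^ p * S.det) ^ (-(1:ℝ)/2) * ∏ k, Real.exp (-(1/2) * (y k) ^ 2) := by
    funext y; exact dens_comp S T hquad y
  rw [he, integral_const_mul, exp_prod_int]
  have h := dens_cst S T hTT hdet
  calc |T.det| * (((2 * π) ^ p * S.det) ^ (-(1:ℝ)/2) * Real.sqrt (2 * π) ^ p)
      = ((2 * π) ^ p * S.det) ^ (-(1:ℝ)/2) * (|T.det| * Real.sqrt (2 * π) ^ p) := by ring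
    _ = 1 := h

lemma dens_moment (S T : Matrix (Fin p) (Fin p) ℝ) (hsym : Tᵀ = T) (hTT : T * T = S)
    (hdet : T.det ≠ 0) (hquad : Tᵀ * S⁻¹ * T = 1) (A : Matrix (Fin p) (Fin p) ℝ) :
    ∫ y : Fin p → ℝ, (y ⬝ᵥ A.mulVec y) * dens S y = (A * S).trace := by
  rw [cv T hdet (fun y => (y ⬝ᵥ A.mulVec y) * dens S y) ((cont_quad A).mul (dens_cont S))]
  have he : (fun y : Fin p → ℝ => ((T.mulVec y) ⬝ᵥ A.mulVec (T.mulVec y)) * dens S (T.mulVec y))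
      = fun y => ((2 * π) ^ p * S.det) ^ (-(1:ℝ)/2) *
          ((y ⬝ᵥ (Tᵀ * A * T).mulVec y) * ∏ k, Real.exp (-(1/2) * (y k) ^ 2)) := by
    funext y
    rw [quad_comp, dens_comp S T hquad y]
    ring
  rw [he, integral_const_mul, quad_int]
  have htr : (Tᵀ * A * T).trace = (A * S).trace := by
    rw [Matrix.trace_mul_cycle, hsym, hTT, trace_mul_comm]
  rw [htr]
  have h := dens_cst S T hTT hdet
  calc |T.det| * (((2 * π) ^ p * S.det) ^ (-(1:ℝ)/2) *
        ((A * S).trace * Real.sqrt (2 * π) ^ p))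
      = (A * S).trace * (((2 * π) ^ p * S.det) ^ (-(1:ℝ)/2) *
          (|T.det| * Real.sqrt (2 * π) ^ p)) := by ring
    _ = (A * S).trace := by rw [h, mul_one]

lemma dens_moment_integrable (S T : Matrix (Fin p) (Fin p) ℝ) (hdet : T.det ≠ 0)
    (hquad : Tᵀ * S⁻¹ * T = 1) (A : Matrix (Fin p) (Fin p) ℝ) :
    Integrable (fun y : Fin p → ℝ => (y ⬝ᵥ A.mulVec y) * dens S y) := by
  apply cv_integrable T hdet (fun y => (y ⬝ᵥ A.mulVec y) * dens S y) ((cont_quad A).mul (dens_cont S))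
  have he : (fun y : Fin p → ℝ => ((T.mulVec y) ⬝ᵥ A.mulVec (T.mulVec y)) * dens S (T.mulVec y))
      = fun y => ((2 * π) ^ p * S.det) ^ (-(1:ℝ)/2) *
          ((y ⬝ᵥ (Tᵀ * A * T).mulVec y) * ∏ k, Real.exp (-(1/2) * (y k) ^ 2)) := by
    funext y
    rw [quad_comp, dens_comp S T hquad y]
    ring
  rw [he]
  exact (quad_integrable _).const_mul _

-- transfer lemmas
lemma integral_eucl (F : (Fin p → ℝ) → ℝ) :
    ∫ x : EuclideanSpace ℝ (Fin p), F (fun i => x i) = ∫ y : Fin p → ℝ, F y :=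
  (EuclideanSpace.volume_preserving_symm_measurableEquiv_toLp (Fin p)).integral_comp
    (MeasurableEquiv.toLp 2 (Fin p → ℝ)).symm.measurableEmbedding F

lemma integrable_eucl (F : (Fin p → ℝ) → ℝ) (hF : Integrable F) :
    Integrable (fun x : EuclideanSpace ℝ (Fin p) => F (fun i => x i)) := by
  have := ((EuclideanSpace.volume_preserving_symm_measurableEquiv_toLp (Fin p)).integrable_comp_emb
    (MeasurableEquiv.toLp 2 (Fin p → ℝ)).symm.measurableEmbedding (g := F)).mpr hF
  exact this

lemma gaussianDensity_eq (S : Matrix (Fin p) (Fin p) ℝ) (x : EuclideanSpace ℝ (Fin p)) :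
    gaussianDensity S x = dens S (fun i => x i) := rfl

lemma gaussianDensity_cont (S : Matrix (Fin p) (Fin p) ℝ) :
    Continuous (gaussianDensity S) := by
  have h : Continuous (fun x : EuclideanSpace ℝ (Fin p) => (fun i => x i : Fin p → ℝ)) :=
    PiLp.continuous_ofLp ..
  exact (dens_cont S).comp h

end Aux

/-- For `Σ₁ = λU₁U₁ᵀ + σ²I` and `Σ₂ = λU₂U₂ᵀ + σ²I` with `U₁, U₂ ∈ O_{p,r}`,
`KL(N(0,Σ₁) ‖ N(0,Σ₂)) = (1/2)(λ/σ² − λ/(λ+σ²))·(r − tr(U₂U₂ᵀU₁U₁ᵀ))`. -/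
theorem klDiv_spiked_gaussians (p r : ℕ) (lam s2 : ℝ) (hlam : 0 < lam) (hs2 : 0 < s2)
    (U₁ U₂ : Matrix (Fin p) (Fin r) ℝ) (h₁ : U₁ᵀ * U₁ = 1) (h₂ : U₂ᵀ * U₂ = 1) :
    klDiv (gaussianMeasure (lam • (U₁ * U₁ᵀ) + s2 • (1 : Matrix (Fin p) (Fin p) ℝ)))
        (gaussianMeasure (lam • (U₂ * U₂ᵀ) + s2 • (1 : Matrix (Fin p) (Fin p) ℝ)))
      = (1 / 2) * (lam / s2 - lam / (lam + s2)) *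
          ((r : ℝ) - Matrix.trace (U₂ * U₂ᵀ * (U₁ * U₁ᵀ))) := by
  set S₁ := lam • (U₁ * U₁ᵀ) + s2 • (1 : Matrix (Fin p) (Fin p) ℝ) with hS₁
  set S₂ := lam • (U₂ * U₂ᵀ) + s2 • (1 : Matrix (Fin p) (Fin p) ℝ) with hS₂
  obtain ⟨T₁, hT₁sym, hT₁TT, hT₁det, hT₁quad⟩ := exists_sqrt lam s2 hlam hs2 U₁ h₁
  obtain ⟨T₂, hT₂sym, hT₂TT, hT₂det, hT₂quad⟩ := exists_sqrt lam s2 hlam hs2 U₂ h₂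
  have hdets : S₁.det = S₂.det := by
    rw [hS₁, hS₂, sigma_det lam s2 hs2.ne' U₁ h₁, sigma_det lam s2 hs2.ne' U₂ h₂]
  have hdet2pos : 0 < S₂.det := by
    rw [hS₂, sigma_det lam s2 hs2.ne' U₂ h₂]
    have : 0 < 1 + lam / s2 := by positivity
    positivity
  set fP := gaussianDensity S₁ with hfP
  set fQ := gaussianDensity S₂ with hfQ
  have hCpos : 0 < ((2 * π) ^ p * S₂.det) ^ (-(1:ℝ)/2) :=
    Real.rpow_pos_of_pos (by positivity) _
  have hfQpos : ∀ x, 0 < fQ x := fun x => mul_pos hCpos (Real.exp_pos _)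
  have hfPpos : ∀ x, 0 < fP x := fun x => by
    have : 0 < ((2 * π) ^ p * S₁.det) ^ (-(1:ℝ)/2) := by
      rw [hdets]; exact hCpos
    exact mul_pos this (Real.exp_pos _)
  set P := gaussianMeasure S₁ with hP
  set Q := gaussianMeasure S₂ with hQ
  have hfP_int : Integrable fP := by
    have := integrable_eucl (dens S₁) (dens_integrable S₁ T₁ hT₁det hT₁quad)
    exact this
  have hfQ_int : Integrable fQ := by
    have := integrable_eucl (dens S₂) (dens_integrable S₂ T₂ hT₂det hT₂quad)
    exact this
  have hfPnorm : ∫ x, fP x = 1 := by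
    have := integral_eucl (dens S₁)
    rw [hfP]
    simp only [gaussianDensity_eq]
    rw [this, dens_norm S₁ T₁ hT₁TT hT₁det hT₁quad]
  have hfQnorm : ∫ x, fQ x = 1 := by
    have := integral_eucl (dens S₂)
    rw [hfQ]
    simp only [gaussianDensity_eq]
    rw [this, dens_norm S₂ T₂ hT₂TT hT₂det hT₂quad]
  have hPprob : IsProbabilityMeasure P := by
    constructor
    rw [hP, gaussianMeasure, withDensity_apply _ MeasurableSet.univ, Measure.restrict_univ,
      ← ofReal_integral_eq_lintegral_ofReal hfP_int
        (Filter.Eventually.of_forall (fun x => (hfPpos x).le)), hfPnorm, ENNReal.ofReal_one]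
  have hQprob : IsProbabilityMeasure Q := by
    constructor
    rw [hQ, gaussianMeasure, withDensity_apply _ MeasurableSet.univ, Measure.restrict_univ,
      ← ofReal_integral_eq_lintegral_ofReal hfQ_int
        (Filter.Eventually.of_forall (fun x => (hfQpos x).le)), hfQnorm, ENNReal.ofReal_one]
  set h : EuclideanSpace ℝ (Fin p) → ℝ≥0∞ := fun x => ENNReal.ofReal (fP x / fQ x) with hh
  have hmeas_h : Measurable h := by
    apply Measurable.ennreal_ofReal
    exact ((gaussianDensity_cont S₁).div (gaussianDensity_cont S₂)
      (fun x => (hfQpos x).ne')).measurable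
  have hmeas_fQ : Measurable (fun x => ENNReal.ofReal (fQ x)) :=
    (gaussianDensity_cont S₂).measurable.ennreal_ofReal
  have hPQ : P = Q.withDensity h := by
    rw [hP, hQ, gaussianMeasure, gaussianMeasure, ← withDensity_mul _ hmeas_fQ hmeas_h]
    congr 1
    funext x
    rw [Pi.mul_apply, ← ENNReal.ofReal_mul (hfQpos x).le, mul_comm (fQ x),
      div_mul_cancel₀ _ (hfQpos x).ne']
  haveI := hPprob
  haveI := hQprob
  have hac : P ≪ Q := by
    rw [hPQ]; exact withDensity_absolutelyContinuous Q h
  have hrn : P.rnDeriv Q =ᵐ[Q] h := by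
    rw [hPQ]; exact Measure.rnDeriv_withDensity Q hmeas_h
  have hrnP : P.rnDeriv Q =ᵐ[P] h := hac.ae_le hrn
  have hkl : klDiv P Q = ∫ x, Real.log (fP x / fQ x) ∂P := by
    unfold klDiv
    apply integral_congr_ae
    filter_upwards [hrnP] with x hx
    rw [hx, hh, ENNReal.toReal_ofReal (div_nonneg (hfPpos x).le (hfQpos x).le)]
  have hlog : ∀ x : EuclideanSpace ℝ (Fin p), Real.log (fP x / fQ x)
      = (1/2) * (((fun i => x i) ⬝ᵥ S₂⁻¹.mulVec (fun i => x i))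
               - ((fun i => x i) ⬝ᵥ S₁⁻¹.mulVec (fun i => x i))) := by
    intro x
    have e1 : fP x = ((2 * π) ^ p * S₂.det) ^ (-(1:ℝ)/2) *
        Real.exp (-(1/2) * ((fun i => x i) ⬝ᵥ S₁⁻¹.mulVec (fun i => x i))) := by
      rw [hfP]
      unfold gaussianDensity
      rw [hdets]
    have e2 : fQ x = ((2 * π) ^ p * S₂.det) ^ (-(1:ℝ)/2) *
        Real.exp (-(1/2) * ((fun i => x i) ⬝ᵥ S₂⁻¹.mulVec (fun i => x i))) := rfl
    rw [e1, e2, mul_div_mul_left _ _ (ne_of_gt hCpos), ← Real.exp_sub, Real.log_exp]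
    ring
  set F : (Fin p → ℝ) → ℝ := fun y =>
    (1/2) * ((y ⬝ᵥ S₂⁻¹.mulVec y) - (y ⬝ᵥ S₁⁻¹.mulVec y)) * dens S₁ y with hF
  have hmeasnn : Measurable (fun x => (fP x).toNNReal) :=
    (gaussianDensity_cont S₁).measurable.real_toNNReal
  have hstep2 : klDiv P Q = ∫ y : Fin p → ℝ, F y := by
    rw [hkl, integral_congr_ae (Filter.Eventually.of_forall hlog)]
    have hP' : P = volume.withDensity (fun x => ((fP x).toNNReal : ℝ≥0∞)) := rfl
    rw [hP', integral_withDensity_eq_integral_smul hmeasnn]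
    rw [← integral_eucl F]
    apply integral_congr_ae
    apply Filter.Eventually.of_forall
    intro x
    have hcoe : ((fP x).toNNReal : ℝ) = fP x := Real.coe_toNNReal _ (hfPpos x).le
    have hdP : dens S₁ (fun i => x i) = fP x := rfl
    simp only [NNReal.smul_def, hcoe, hF, hdP, smul_eq_mul]
    ring
  have hFval : ∫ y : Fin p → ℝ, F y = (1/2) * ((S₂⁻¹ - S₁⁻¹) * S₁).trace := by
    have hrepr : F = fun y => (1/2) * ((y ⬝ᵥ (S₂⁻¹ - S₁⁻¹).mulVec y) * dens S₁ y) := by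
      funext y
      rw [hF, Matrix.sub_mulVec, dotProduct_sub]
      ring
    rw [hrepr, integral_const_mul, dens_moment S₁ T₁ hT₁sym hT₁TT hT₁det hT₁quad _]
  have hinvdiff : S₂⁻¹ - S₁⁻¹ = (lam/(s2*(lam+s2))) • (U₁*U₁ᵀ - U₂*U₂ᵀ) := by
    rw [hS₁, hS₂, sigma_inv lam s2 hlam hs2 U₁ h₁, sigma_inv lam s2 hlam hs2 U₂ h₂]
    module
  have htr : ((S₂⁻¹ - S₁⁻¹) * S₁).trace
      = (lam/(s2*(lam+s2))) * (lam * ((r:ℝ) - (U₂*U₂ᵀ*(U₁*U₁ᵀ)).trace)) := by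
    rw [hinvdiff, Matrix.smul_mul, trace_smul, hS₁]
    have expand : (U₁*U₁ᵀ - U₂*U₂ᵀ) * (lam • (U₁*U₁ᵀ) + s2 • 1)
        = lam • (U₁*U₁ᵀ) + s2 • (U₁*U₁ᵀ) - (lam • (U₂*U₂ᵀ*(U₁*U₁ᵀ)) + s2 • (U₂*U₂ᵀ)) := by
      rw [Matrix.sub_mul, Matrix.mul_add, Matrix.mul_add, Matrix.mul_smul, Matrix.mul_smul,
        Matrix.mul_smul, Matrix.mul_smul, proj_idem U₁ h₁, Matrix.mul_one, Matrix.mul_one,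
        Matrix.mul_assoc]
    rw [expand, trace_sub, trace_add, trace_add, trace_smul, trace_smul, trace_smul, trace_smul,
      trace_proj U₁ h₁, trace_proj U₂ h₂]
    simp only [smul_eq_mul]
    ring
  rw [hstep2, hFval, htr]
  have hls : lam + s2 ≠ 0 := by positivity
  field_simp
  ring
end

section
/- Let Σ = UΛUᵀ + σ²I_p be a spiked covariance matrix with smallest spiked eigenvalue λ_r, let Δ be symmetric with λ_r ≥ (4+δ)‖Δ‖ for some δ > 0, and let Û be the top-r eigenvectors of Σ + Δ. Then ‖ÛÛᵀ − UUᵀ‖ ≤ 2‖Λ^{-1}UᵀΔU_⊥‖ + 6(4+δ)·‖Δ‖·‖UᵀΔU_⊥‖/(δλ_r²). -/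
open Matrix

/-- The spectral (ℓ₂ operator) norm of a real matrix. -/
noncomputable def specNorm {m n : ℕ} (A : Matrix (Fin m) (Fin n) ℝ) : ℝ :=
  ‖LinearMap.toContinuousLinearMap (Matrix.toEuclideanLin A)‖

open scoped Matrix.Norms.L2Operator

lemma specNorm_eq {m n : ℕ} (A : Matrix (Fin m) (Fin n) ℝ) : specNorm A = ‖A‖ := rfl

lemma conjT_eq {m n : ℕ} (A : Matrix (Fin m) (Fin n) ℝ) : Aᴴ = Aᵀ := by
  ext i j; simp [conjTranspose_apply]

lemma normT {m n : ℕ} (A : Matrix (Fin m) (Fin n) ℝ) : ‖Aᵀ‖ = ‖A‖ := by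
  rw [← conjT_eq]; exact Matrix.l2_opNorm_conjTranspose A

lemma norm_one_le (n : ℕ) : ‖(1 : Matrix (Fin n) (Fin n) ℝ)‖ ≤ 1 := by
  rw [Matrix.cstar_norm_def, _root_.map_one]
  exact ContinuousLinearMap.norm_id_le

lemma norm_le_one_of_orth {m n : ℕ} (M : Matrix (Fin m) (Fin n) ℝ) (h : Mᵀ * M = 1) :
    ‖M‖ ≤ 1 := by
  have h2 : ‖M‖ * ‖M‖ = ‖(1 : Matrix (Fin n) (Fin n) ℝ)‖ := by
    rw [← h, ← conjT_eq, Matrix.l2_opNorm_conjTranspose_mul_self]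
  nlinarith [norm_nonneg M, norm_one_le n]

lemma normT_le_one_of_orth {m n : ℕ} (M : Matrix (Fin m) (Fin n) ℝ)
    (h : Mᵀ * M = 1) : ‖Mᵀ‖ ≤ 1 := by rw [normT]; exact norm_le_one_of_orth M h

lemma norm_diagonal_le {n : ℕ} (d : Fin n → ℝ) (c : ℝ) (hc : 0 ≤ c) (h : ∀ i, |d i| ≤ c) :
    ‖(diagonal d : Matrix (Fin n) (Fin n) ℝ)‖ ≤ c := by
  rw [Matrix.l2_opNorm_def]
  apply ContinuousLinearMap.opNorm_le_bound _ hc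
  intro x
  rw [EuclideanSpace.norm_eq, EuclideanSpace.norm_eq, ← Real.sqrt_sq hc, ← Real.sqrt_mul (by positivity)]
  apply Real.sqrt_le_sqrt
  rw [Finset.mul_sum]
  apply Finset.sum_le_sum
  intro i _
  have : ((Matrix.toEuclideanLin ≪≫ₗ LinearMap.toContinuousLinearMap) (diagonal d) x) i
      = d i * x i := by
    simp [Matrix.toEuclideanLin_apply, Matrix.mulVec_diagonal]
  rw [this]
  have := h i
  have h2 : |x i| ≤ |x i| := le_refl _
  simp only [Real.norm_eq_abs]
  rw [abs_mul]
  rw [mul_pow]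
  apply mul_le_mul_of_nonneg_right _ (sq_nonneg _)
  exact pow_le_pow_left₀ (abs_nonneg _) this 2

lemma quadform_abs {n : ℕ} (M : Matrix (Fin n) (Fin n) ℝ) (x : Fin n → ℝ) :
    |x ⬝ᵥ (M *ᵥ x)| ≤ ‖M‖ * (x ⬝ᵥ x) := by
  set y : EuclideanSpace ℝ (Fin n) := (WithLp.equiv 2 _).symm x with hy
  have hinner : ∀ u v : EuclideanSpace ℝ (Fin n),
      (inner ℝ u v : ℝ) = (fun i => u i) ⬝ᵥ (fun i => v i) := by
    intro u v
    simp [PiLp.inner_apply, RCLike.inner_apply, dotProduct, mul_comm]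
  have h1 : x ⬝ᵥ (M *ᵥ x) =
      (inner ℝ y (LinearMap.toContinuousLinearMap (Matrix.toEuclideanLin M) y) : ℝ) := by
    rw [hinner]
    simp [hy, Matrix.toEuclideanLin_apply, dotProduct]
  have h2 : x ⬝ᵥ x = (inner ℝ y y : ℝ) := by rw [hinner]; simp [hy, dotProduct]
  rw [h1, h2, real_inner_self_eq_norm_mul_norm]
  calc |(inner ℝ y (LinearMap.toContinuousLinearMap (Matrix.toEuclideanLin M) y) : ℝ)|
      ≤ ‖y‖ * ‖LinearMap.toContinuousLinearMap (Matrix.toEuclideanLin M) y‖ :=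
        abs_real_inner_le_norm _ _
    _ ≤ ‖y‖ * (‖M‖ * ‖y‖) := by
        apply mul_le_mul_of_nonneg_left _ (norm_nonneg y)
        exact ContinuousLinearMap.le_opNorm _ y
    _ = ‖M‖ * (‖y‖ * ‖y‖) := by ring

lemma dp_mul {m n k : ℕ} (A : Matrix (Fin m) (Fin n) ℝ) (B : Matrix (Fin m) (Fin k) ℝ)
    (u : Fin n → ℝ) (v : Fin k → ℝ) :
    (A *ᵥ u) ⬝ᵥ (B *ᵥ v) = u ⬝ᵥ ((Aᵀ * B) *ᵥ v) := by
  rw [← Matrix.mulVec_mulVec, ← Matrix.vecMul_transpose, ← Matrix.dotProduct_mulVec]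

lemma dp_t {m n : ℕ} (M : Matrix (Fin n) (Fin m) ℝ) (u : Fin m → ℝ) (v : Fin n → ℝ) :
    u ⬝ᵥ (Mᵀ *ᵥ v) = (M *ᵥ u) ⬝ᵥ v := by
  rw [Matrix.dotProduct_mulVec, Matrix.vecMul_transpose]

lemma exists_ker {r : ℕ} (hr : 0 < r) (M : Matrix (Fin r) (Fin r) ℝ) (i₀ : Fin r) :
    ∃ w : Fin r → ℝ, w ≠ 0 ∧ ∀ k : Fin r, k ≠ i₀ → (M *ᵥ w) k = 0 := by
  classical
  let g : (Fin r → ℝ) →ₗ[ℝ] ({k : Fin r // k ≠ i₀} → ℝ) :=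
    LinearMap.pi (fun k => (LinearMap.proj k.1).comp (Matrix.mulVecLin M))
  have hcard : Fintype.card {k : Fin r // k ≠ i₀} = r - 1 := by
    have := Fintype.card_subtype_compl (fun k : Fin r => k = i₀)
    simp only [Fintype.card_subtype_eq, Fintype.card_fin] at this
    exact this
  have hrange : Module.finrank ℝ (LinearMap.range g) ≤ r - 1 := by
    calc Module.finrank ℝ (LinearMap.range g)
        ≤ Module.finrank ℝ ({k : Fin r // k ≠ i₀} → ℝ) := Submodule.finrank_le _
      _ = r - 1 := by simp [Module.finrank_pi, hcard]
  have hk := LinearMap.finrank_range_add_finrank_ker g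
  have hdom : Module.finrank ℝ (Fin r → ℝ) = r := by simp
  have hker : 0 < Module.finrank ℝ (LinearMap.ker g) := by omega
  have hne : LinearMap.ker g ≠ ⊥ := by
    intro h
    rw [h] at hker
    simp at hker
  obtain ⟨w, hw, hw0⟩ := Submodule.ne_bot_iff _ |>.mp hne
  refine ⟨w, hw0, fun k hk => ?_⟩
  have := congrFun (LinearMap.mem_ker.mp hw) ⟨k, hk⟩
  simpa [g] using this

lemma nmul {m n k : ℕ} (A : Matrix (Fin m) (Fin n) ℝ) (B : Matrix (Fin n) (Fin k) ℝ)
    {a b : ℝ} (ha : ‖A‖ ≤ a) (hb : ‖B‖ ≤ b) (hb0 : 0 ≤ b) :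
    ‖A * B‖ ≤ a * b := by
  calc ‖A * B‖ ≤ ‖A‖ * ‖B‖ := Matrix.l2_opNorm_mul A B
    _ ≤ a * b := mul_le_mul ha hb (norm_nonneg _) (le_trans (norm_nonneg _) ha)

lemma norm_sandwich {m n k l : ℕ} (X : Matrix (Fin m) (Fin n) ℝ)
    (M : Matrix (Fin n) (Fin k) ℝ) (Y : Matrix (Fin k) (Fin l) ℝ)
    (hX : ‖X‖ ≤ 1) (hY : ‖Y‖ ≤ 1) : ‖X * M * Y‖ ≤ ‖M‖ := by
  have h1 : ‖X * M * Y‖ ≤ (1 * ‖M‖) * 1 :=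
    nmul _ _ (nmul _ _ hX (le_refl _) (norm_nonneg _)) hY zero_le_one
  simpa using h1

lemma tri3 {m n : ℕ} (X Y Z : Matrix (Fin m) (Fin n) ℝ) :
    ‖X - Y + Z‖ ≤ ‖X‖ + ‖Y‖ + ‖Z‖ := by
  calc ‖X - Y + Z‖ ≤ ‖X - Y‖ + ‖Z‖ := norm_add_le _ _
    _ ≤ ‖X‖ + ‖Y‖ + ‖Z‖ := by
        have := norm_sub_le X Y
        linarith

lemma tri3' {m n : ℕ} (X Y Z : Matrix (Fin m) (Fin n) ℝ) :
    ‖X - Y - Z‖ ≤ ‖X‖ + ‖Y‖ + ‖Z‖ := by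
  calc ‖X - Y - Z‖ ≤ ‖X - Y‖ + ‖Z‖ := norm_sub_le _ _
    _ ≤ ‖X‖ + ‖Y‖ + ‖Z‖ := by
        have := norm_sub_le X Y
        linarith

-- Weyl-type eigenvalue bounds
section Weyl
variable {p r : ℕ}

lemma quad_lower_aux {n : ℕ} (Λ : Fin n → ℝ) (lam : ℝ) (hΛ : ∀ i, lam ≤ Λ i)
    (w : Fin n → ℝ) : lam * (w ⬝ᵥ w) ≤ w ⬝ᵥ (diagonal Λ *ᵥ w) := by
  simp only [dotProduct, Matrix.mulVec_diagonal, Finset.mul_sum]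
  apply Finset.sum_le_sum
  intro i _
  have h1 : lam * (w i * w i) ≤ Λ i * (w i * w i) :=
    mul_le_mul_of_nonneg_right (hΛ i) (mul_self_nonneg _)
  nlinarith [h1]

lemma weyl_lower (hr : 0 < r)
    (U : Matrix (Fin p) (Fin r) ℝ) (hU : Uᵀ * U = 1)
    (Λ : Fin r → ℝ) (lam σ2 : ℝ) (hΛlam : ∀ i, lam ≤ Λ i)
    (Δ : Matrix (Fin p) (Fin p) ℝ)
    (Uhat : Matrix (Fin p) (Fin r) ℝ) (Ucomp : Matrix (Fin p) (Fin (p - r)) ℝ)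
    (D : Fin r → ℝ) (D' : Fin (p - r) → ℝ)
    (hcompl : Uhat * Uhatᵀ + Ucomp * Ucompᵀ = 1)
    (hdecomp : U * Matrix.diagonal Λ * Uᵀ + σ2 • (1 : Matrix (Fin p) (Fin p) ℝ) + Δ
        = Uhat * Matrix.diagonal D * Uhatᵀ + Ucomp * Matrix.diagonal D' * Ucompᵀ)
    (htop : ∀ (i : Fin r) (j : Fin (p - r)), D' j ≤ D i) :
    ∀ i, lam + σ2 - ‖Δ‖ ≤ D i := by
  intro i
  obtain ⟨i₀, -, hmin⟩ := Finset.exists_min_image (Finset.univ : Finset (Fin r)) D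
    ⟨i, Finset.mem_univ i⟩
  refine le_trans ?_ (hmin i (Finset.mem_univ i))
  obtain ⟨w, hw0, hwk⟩ := exists_ker hr (Uhatᵀ * U) i₀
  set x : Fin p → ℝ := U *ᵥ w with hx
  set y : Fin r → ℝ := (Uhatᵀ * U) *ᵥ w with hy
  set z : Fin (p - r) → ℝ := (Ucompᵀ * U) *ᵥ w with hz
  have hxx : x ⬝ᵥ x = w ⬝ᵥ w := by
    rw [hx, dp_mul, hU, Matrix.one_mulVec]
  have hww : 0 < w ⬝ᵥ w := by
    rcases Function.ne_iff.mp hw0 with ⟨i', hi'⟩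
    have h1 : ∀ j ∈ (Finset.univ : Finset (Fin r)), 0 ≤ w j * w j :=
      fun j _ => mul_self_nonneg _
    exact Finset.sum_pos' h1 ⟨i', Finset.mem_univ i', mul_self_pos.mpr hi'⟩
  -- quadratic form
  set q : ℝ := x ⬝ᵥ ((U * Matrix.diagonal Λ * Uᵀ + σ2 • (1 : Matrix (Fin p) (Fin p) ℝ) + Δ) *ᵥ x)
    with hq
  -- lower bound for q
  have hUtx : Uᵀ *ᵥ x = w := by rw [hx, Matrix.mulVec_mulVec, hU, Matrix.one_mulVec]
  have hlow : (lam + σ2 - ‖Δ‖) * (w ⬝ᵥ w) ≤ q := by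
    have e1 : x ⬝ᵥ ((U * Matrix.diagonal Λ * Uᵀ) *ᵥ x) = w ⬝ᵥ (diagonal Λ *ᵥ w) := by
      have : (U * Matrix.diagonal Λ * Uᵀ) *ᵥ x = U *ᵥ (Matrix.diagonal Λ *ᵥ w) := by
        rw [← Matrix.mulVec_mulVec, ← Matrix.mulVec_mulVec, hUtx]
      rw [this, hx, dp_mul, hU, Matrix.one_mulVec]
    have e2 : x ⬝ᵥ ((σ2 • (1 : Matrix (Fin p) (Fin p) ℝ)) *ᵥ x) = σ2 * (x ⬝ᵥ x) := by
      rw [Matrix.smul_mulVec, Matrix.one_mulVec, dotProduct_smul, smul_eq_mul]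
    have e3 : -(‖Δ‖ * (x ⬝ᵥ x)) ≤ x ⬝ᵥ (Δ *ᵥ x) := neg_le_of_abs_le (quadform_abs Δ x)
    have e4 := quad_lower_aux Λ lam hΛlam w
    rw [hq, Matrix.add_mulVec, Matrix.add_mulVec, dotProduct_add, dotProduct_add, e1, e2]
    rw [hxx] at e3 ⊢
    nlinarith [e3, e4]
  -- upper bound for q
  have hupp : q ≤ D i₀ * (w ⬝ᵥ w) := by
    have e5 : x ⬝ᵥ ((Uhat * Matrix.diagonal D * Uhatᵀ) *ᵥ x) = y ⬝ᵥ (diagonal D *ᵥ y) := by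
      have h1 : (Uhat * Matrix.diagonal D * Uhatᵀ) *ᵥ x
          = Uhat *ᵥ (Matrix.diagonal D *ᵥ y) := by
        rw [hx, hy, ← Matrix.mulVec_mulVec, ← Matrix.mulVec_mulVec, ← Matrix.mulVec_mulVec]
      rw [h1, hx, dp_mul, show Uᵀ * Uhat = (Uhatᵀ * U)ᵀ by
        rw [Matrix.transpose_mul, Matrix.transpose_transpose], dp_t, ← hy]
    have e6 : x ⬝ᵥ ((Ucomp * Matrix.diagonal D' * Ucompᵀ) *ᵥ x) = z ⬝ᵥ (diagonal D' *ᵥ z) := by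
      have h1 : (Ucomp * Matrix.diagonal D' * Ucompᵀ) *ᵥ x
          = Ucomp *ᵥ (Matrix.diagonal D' *ᵥ z) := by
        rw [hx, hz, ← Matrix.mulVec_mulVec, ← Matrix.mulVec_mulVec, ← Matrix.mulVec_mulVec]
      rw [h1, hx, dp_mul, show Uᵀ * Ucomp = (Ucompᵀ * U)ᵀ by
        rw [Matrix.transpose_mul, Matrix.transpose_transpose], dp_t, ← hz]
    have e7 : y ⬝ᵥ (diagonal D *ᵥ y) ≤ D i₀ * (y ⬝ᵥ y) := by
      simp only [dotProduct, Matrix.mulVec_diagonal, Finset.mul_sum]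
      apply Finset.sum_le_sum
      intro k _
      by_cases hk : k = i₀
      · subst hk; nlinarith [mul_self_nonneg (y k)]
      · have : y k = 0 := hwk k hk
        simp [this]
    have e8 : z ⬝ᵥ (diagonal D' *ᵥ z) ≤ D i₀ * (z ⬝ᵥ z) := by
      simp only [dotProduct, Matrix.mulVec_diagonal, Finset.mul_sum]
      apply Finset.sum_le_sum
      intro j _
      have := htop i₀ j
      nlinarith [mul_self_nonneg (z j)]
    have e9 : y ⬝ᵥ y + z ⬝ᵥ z = w ⬝ᵥ w := by
      have hyy : y ⬝ᵥ y = w ⬝ᵥ (((Uhatᵀ * U)ᵀ * (Uhatᵀ * U)) *ᵥ w) := by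
        rw [hy, dp_mul]
      have hzz : z ⬝ᵥ z = w ⬝ᵥ (((Ucompᵀ * U)ᵀ * (Ucompᵀ * U)) *ᵥ w) := by
        rw [hz, dp_mul]
      have hM : (Uhatᵀ * U)ᵀ * (Uhatᵀ * U) + (Ucompᵀ * U)ᵀ * (Ucompᵀ * U) = 1 := by
        have h2 : Uᵀ * ((Uhat * Uhatᵀ + Ucomp * Ucompᵀ) * U) = 1 := by
          rw [hcompl, Matrix.one_mul, hU]
        calc (Uhatᵀ * U)ᵀ * (Uhatᵀ * U) + (Ucompᵀ * U)ᵀ * (Ucompᵀ * U)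
            = Uᵀ * ((Uhat * Uhatᵀ + Ucomp * Ucompᵀ) * U) := by
              simp only [Matrix.transpose_mul, Matrix.transpose_transpose, Matrix.add_mul,
                Matrix.mul_add, Matrix.mul_assoc]
          _ = 1 := h2
      rw [hyy, hzz, ← dotProduct_add, ← Matrix.add_mulVec, hM, Matrix.one_mulVec]
    calc q = y ⬝ᵥ (diagonal D *ᵥ y) + z ⬝ᵥ (diagonal D' *ᵥ z) := by
          rw [hq, hdecomp, Matrix.add_mulVec, dotProduct_add, e5, e6]
      _ ≤ D i₀ * (y ⬝ᵥ y) + D i₀ * (z ⬝ᵥ z) := add_le_add e7 e8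
      _ = D i₀ * (w ⬝ᵥ w) := by rw [← e9]; ring
  nlinarith [hlow, hupp, hww]

end Weyl

lemma weyl_upper {p r : ℕ}
    (U : Matrix (Fin p) (Fin r) ℝ)
    (Uperp : Matrix (Fin p) (Fin (p - r)) ℝ) (hUperp : Uperpᵀ * Uperp = 1)
    (horthU : Uᵀ * Uperp = 0)
    (Λ : Fin r → ℝ) (σ2 : ℝ)
    (Δ : Matrix (Fin p) (Fin p) ℝ)
    (Uhat : Matrix (Fin p) (Fin r) ℝ) (Ucomp : Matrix (Fin p) (Fin (p - r)) ℝ)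
    (D : Fin r → ℝ) (D' : Fin (p - r) → ℝ)
    (hcompl : Uhat * Uhatᵀ + Ucomp * Ucompᵀ = 1)
    (hdecomp : U * Matrix.diagonal Λ * Uᵀ + σ2 • (1 : Matrix (Fin p) (Fin p) ℝ) + Δ
        = Uhat * Matrix.diagonal D * Uhatᵀ + Ucomp * Matrix.diagonal D' * Ucompᵀ)
    (htop : ∀ (i : Fin r) (j : Fin (p - r)), D' j ≤ D i) :
    ∀ j, D' j ≤ σ2 + ‖Δ‖ := by
  intro j
  obtain ⟨j₀, -, hmax⟩ := Finset.exists_max_image (Finset.univ : Finset (Fin (p - r))) D'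
    ⟨j, Finset.mem_univ j⟩
  refine le_trans (hmax j (Finset.mem_univ j)) ?_
  obtain ⟨w, hw0, hwk⟩ := exists_ker (Fin.pos j) (Ucompᵀ * Uperp) j₀
  set x : Fin p → ℝ := Uperp *ᵥ w with hx
  set y : Fin r → ℝ := (Uhatᵀ * Uperp) *ᵥ w with hy
  set z : Fin (p - r) → ℝ := (Ucompᵀ * Uperp) *ᵥ w with hz
  have hxx : x ⬝ᵥ x = w ⬝ᵥ w := by
    rw [hx, dp_mul, hUperp, Matrix.one_mulVec]
  have hww : 0 < w ⬝ᵥ w := by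
    rcases Function.ne_iff.mp hw0 with ⟨i', hi'⟩
    have h1 : ∀ j ∈ (Finset.univ : Finset (Fin (p - r))), 0 ≤ w j * w j :=
      fun j _ => mul_self_nonneg _
    exact Finset.sum_pos' h1 ⟨i', Finset.mem_univ i', mul_self_pos.mpr hi'⟩
  set q : ℝ := x ⬝ᵥ ((U * Matrix.diagonal Λ * Uᵀ + σ2 • (1 : Matrix (Fin p) (Fin p) ℝ) + Δ) *ᵥ x)
    with hq
  have hupp : q ≤ (σ2 + ‖Δ‖) * (w ⬝ᵥ w) := by
    have e1 : x ⬝ᵥ ((U * Matrix.diagonal Λ * Uᵀ) *ᵥ x) = 0 := by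
      have h1 : (U * Matrix.diagonal Λ * Uᵀ) *ᵥ x = ((U * Matrix.diagonal Λ * Uᵀ) * Uperp) *ᵥ w := by
        rw [hx, Matrix.mulVec_mulVec]
      have h2 : (U * Matrix.diagonal Λ * Uᵀ) * Uperp = 0 := by
        rw [Matrix.mul_assoc, horthU, Matrix.mul_zero]
      rw [h1, h2, Matrix.zero_mulVec, dotProduct_zero]
    have e2 : x ⬝ᵥ ((σ2 • (1 : Matrix (Fin p) (Fin p) ℝ)) *ᵥ x) = σ2 * (x ⬝ᵥ x) := by
      rw [Matrix.smul_mulVec, Matrix.one_mulVec, dotProduct_smul, smul_eq_mul]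
    have e3 : x ⬝ᵥ (Δ *ᵥ x) ≤ ‖Δ‖ * (x ⬝ᵥ x) := le_of_abs_le (quadform_abs Δ x)
    rw [hq, Matrix.add_mulVec, Matrix.add_mulVec, dotProduct_add, dotProduct_add, e1, e2]
    rw [hxx] at e3 ⊢
    nlinarith [e3]
  have hlow : D' j₀ * (w ⬝ᵥ w) ≤ q := by
    have e5 : x ⬝ᵥ ((Uhat * Matrix.diagonal D * Uhatᵀ) *ᵥ x) = y ⬝ᵥ (diagonal D *ᵥ y) := by
      have h1 : (Uhat * Matrix.diagonal D * Uhatᵀ) *ᵥ x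
          = Uhat *ᵥ (Matrix.diagonal D *ᵥ y) := by
        rw [hx, hy, ← Matrix.mulVec_mulVec, ← Matrix.mulVec_mulVec, ← Matrix.mulVec_mulVec]
      rw [h1, hx, dp_mul, show Uperpᵀ * Uhat = (Uhatᵀ * Uperp)ᵀ by
        rw [Matrix.transpose_mul, Matrix.transpose_transpose], dp_t, ← hy]
    have e6 : x ⬝ᵥ ((Ucomp * Matrix.diagonal D' * Ucompᵀ) *ᵥ x) = z ⬝ᵥ (diagonal D' *ᵥ z) := by
      have h1 : (Ucomp * Matrix.diagonal D' * Ucompᵀ) *ᵥ x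
          = Ucomp *ᵥ (Matrix.diagonal D' *ᵥ z) := by
        rw [hx, hz, ← Matrix.mulVec_mulVec, ← Matrix.mulVec_mulVec, ← Matrix.mulVec_mulVec]
      rw [h1, hx, dp_mul, show Uperpᵀ * Ucomp = (Ucompᵀ * Uperp)ᵀ by
        rw [Matrix.transpose_mul, Matrix.transpose_transpose], dp_t, ← hz]
    have e7 : D' j₀ * (y ⬝ᵥ y) ≤ y ⬝ᵥ (diagonal D *ᵥ y) := by
      simp only [dotProduct, Matrix.mulVec_diagonal, Finset.mul_sum]
      apply Finset.sum_le_sum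
      intro k _
      have := htop k j₀
      nlinarith [mul_self_nonneg (y k)]
    have e8 : D' j₀ * (z ⬝ᵥ z) ≤ z ⬝ᵥ (diagonal D' *ᵥ z) := by
      simp only [dotProduct, Matrix.mulVec_diagonal, Finset.mul_sum]
      apply Finset.sum_le_sum
      intro j' _
      by_cases hj : j' = j₀
      · subst hj; nlinarith [mul_self_nonneg (z j')]
      · have : z j' = 0 := hwk j' hj
        simp [this]
    have e9 : y ⬝ᵥ y + z ⬝ᵥ z = w ⬝ᵥ w := by
      have hyy : y ⬝ᵥ y = w ⬝ᵥ (((Uhatᵀ * Uperp)ᵀ * (Uhatᵀ * Uperp)) *ᵥ w) := by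
        rw [hy, dp_mul]
      have hzz : z ⬝ᵥ z = w ⬝ᵥ (((Ucompᵀ * Uperp)ᵀ * (Ucompᵀ * Uperp)) *ᵥ w) := by
        rw [hz, dp_mul]
      have hM : (Uhatᵀ * Uperp)ᵀ * (Uhatᵀ * Uperp) + (Ucompᵀ * Uperp)ᵀ * (Ucompᵀ * Uperp) = 1 := by
        have h2 : Uperpᵀ * ((Uhat * Uhatᵀ + Ucomp * Ucompᵀ) * Uperp) = 1 := by
          rw [hcompl, Matrix.one_mul, hUperp]
        calc (Uhatᵀ * Uperp)ᵀ * (Uhatᵀ * Uperp) + (Ucompᵀ * Uperp)ᵀ * (Ucompᵀ * Uperp)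
            = Uperpᵀ * ((Uhat * Uhatᵀ + Ucomp * Ucompᵀ) * Uperp) := by
              simp only [Matrix.transpose_mul, Matrix.transpose_transpose, Matrix.add_mul,
                Matrix.mul_add, Matrix.mul_assoc]
          _ = 1 := h2
      rw [hyy, hzz, ← dotProduct_add, ← Matrix.add_mulVec, hM, Matrix.one_mulVec]
    calc D' j₀ * (w ⬝ᵥ w) = D' j₀ * (y ⬝ᵥ y) + D' j₀ * (z ⬝ᵥ z) := by rw [← e9]; ring
      _ ≤ y ⬝ᵥ (diagonal D *ᵥ y) + z ⬝ᵥ (diagonal D' *ᵥ z) := add_le_add e7 e8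
      _ = q := by rw [hq, hdecomp, Matrix.add_mulVec, dotProduct_add, e5, e6]
  nlinarith [hlow, hupp, hww]

lemma weyl_dlower {p r : ℕ}
    (U : Matrix (Fin p) (Fin r) ℝ)
    (Λ : Fin r → ℝ) (σ2 : ℝ) (hΛ0 : ∀ i, 0 ≤ Λ i)
    (Δ : Matrix (Fin p) (Fin p) ℝ)
    (Uhat : Matrix (Fin p) (Fin r) ℝ) (Ucomp : Matrix (Fin p) (Fin (p - r)) ℝ)
    (D : Fin r → ℝ) (D' : Fin (p - r) → ℝ)
    (hUcomp : Ucompᵀ * Ucomp = 1) (horth : Uhatᵀ * Ucomp = 0)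
    (hdecomp : U * Matrix.diagonal Λ * Uᵀ + σ2 • (1 : Matrix (Fin p) (Fin p) ℝ) + Δ
        = Uhat * Matrix.diagonal D * Uhatᵀ + Ucomp * Matrix.diagonal D' * Ucompᵀ) :
    ∀ j, σ2 - ‖Δ‖ ≤ D' j := by
  intro j
  set e : Fin (p - r) → ℝ := Pi.single j 1 with he
  set x : Fin p → ℝ := Ucomp *ᵥ e with hx
  have hee : e ⬝ᵥ e = 1 := by
    simp [he, dotProduct, Pi.single_apply]
  have hxx : x ⬝ᵥ x = 1 := by
    rw [hx, dp_mul, hUcomp, Matrix.one_mulVec, hee]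
  set q : ℝ := x ⬝ᵥ ((U * Matrix.diagonal Λ * Uᵀ + σ2 • (1 : Matrix (Fin p) (Fin p) ℝ) + Δ) *ᵥ x)
    with hq
  have hlow : σ2 - ‖Δ‖ ≤ q := by
    set v : Fin r → ℝ := (Uᵀ * Ucomp) *ᵥ e with hv
    have e1 : x ⬝ᵥ ((U * Matrix.diagonal Λ * Uᵀ) *ᵥ x) = v ⬝ᵥ (diagonal Λ *ᵥ v) := by
      have h1 : (U * Matrix.diagonal Λ * Uᵀ) *ᵥ x = U *ᵥ (Matrix.diagonal Λ *ᵥ v) := by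
        rw [hx, hv, ← Matrix.mulVec_mulVec, ← Matrix.mulVec_mulVec, ← Matrix.mulVec_mulVec]
      rw [h1, hx, dp_mul, show Ucompᵀ * U = (Uᵀ * Ucomp)ᵀ by
        rw [Matrix.transpose_mul, Matrix.transpose_transpose], dp_t, ← hv]
    have e1' : 0 ≤ v ⬝ᵥ (diagonal Λ *ᵥ v) := by
      have := quad_lower_aux Λ 0 (fun i => hΛ0 i) v
      simpa using this
    have e2 : x ⬝ᵥ ((σ2 • (1 : Matrix (Fin p) (Fin p) ℝ)) *ᵥ x) = σ2 * (x ⬝ᵥ x) := by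
      rw [Matrix.smul_mulVec, Matrix.one_mulVec, dotProduct_smul, smul_eq_mul]
    have e3 : -(‖Δ‖ * (x ⬝ᵥ x)) ≤ x ⬝ᵥ (Δ *ᵥ x) := neg_le_of_abs_le (quadform_abs Δ x)
    rw [hq, Matrix.add_mulVec, Matrix.add_mulVec, dotProduct_add, dotProduct_add, e1, e2]
    rw [hxx] at e3 ⊢
    nlinarith [e3, e1']
  have hupp : q = D' j := by
    have e5 : x ⬝ᵥ ((Uhat * Matrix.diagonal D * Uhatᵀ) *ᵥ x) = 0 := by
      have h1 : Uhatᵀ *ᵥ x = 0 := by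
        rw [hx, Matrix.mulVec_mulVec, horth, Matrix.zero_mulVec]
      have h2 : (Uhat * Matrix.diagonal D * Uhatᵀ) *ᵥ x
          = (Uhat * Matrix.diagonal D) *ᵥ (Uhatᵀ *ᵥ x) := by
        rw [← Matrix.mulVec_mulVec]
      rw [h2, h1, Matrix.mulVec_zero, dotProduct_zero]
    have e6 : x ⬝ᵥ ((Ucomp * Matrix.diagonal D' * Ucompᵀ) *ᵥ x) = D' j := by
      have h1 : Ucompᵀ *ᵥ x = e := by
        rw [hx, Matrix.mulVec_mulVec, hUcomp, Matrix.one_mulVec]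
      have h2 : (Ucomp * Matrix.diagonal D' * Ucompᵀ) *ᵥ x
          = Ucomp *ᵥ (Matrix.diagonal D' *ᵥ e) := by
        rw [← Matrix.mulVec_mulVec, ← Matrix.mulVec_mulVec, h1]
      rw [h2, hx, dp_mul, hUcomp, Matrix.one_mulVec]
      simp [he, dotProduct, Matrix.mulVec_diagonal, Pi.single_apply]
    rw [hq, hdecomp, Matrix.add_mulVec, dotProduct_add, e5, e6, zero_add]
  rw [← hupp]; exact hlow

/-- `Q^{-t} = UΛ^{-t}Uᵀ` for `t ≥ 1`, and `Q⁰ = I − UUᵀ`. -/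
noncomputable def Qmat {p r : ℕ} (U : Matrix (Fin p) (Fin r) ℝ) (Λ : Fin r → ℝ)
    (t : ℕ) : Matrix (Fin p) (Fin p) ℝ :=
  if t = 0 then 1 - U * Uᵀ else U * Matrix.diagonal (fun i => (Λ i)⁻¹ ^ t) * Uᵀ

/-- Tuples `(s₁, ..., s_{k+1})` of nonnegative integers summing to `k`. -/
def tupleSet (k : ℕ) : Finset (Fin (k + 1) → ℕ) :=
  (Fintype.piFinset fun _ => Finset.range (k + 1)).filter fun s => ∑ i, s i = k

/-- `τ(s) = #{j : s_j > 0}`. -/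
def tau {k : ℕ} (s : Fin (k + 1) → ℕ) : ℕ :=
  (Finset.univ.filter fun j => 0 < s j).card

/-- The `k`-th order term of the spectral representation formula:
`S_{Σ,k}(Δ) = Σ_{s₁+...+s_{k+1}=k} (−1)^{1+τ(s)} Q^{-s₁} Δ Q^{-s₂} ⋯ Δ Q^{-s_{k+1}}`. -/
noncomputable def Sterm {p r : ℕ} (U : Matrix (Fin p) (Fin r) ℝ) (Λ : Fin r → ℝ)
    (Δ : Matrix (Fin p) (Fin p) ℝ) (k : ℕ) : Matrix (Fin p) (Fin p) ℝ :=
  ∑ s ∈ tupleSet k, ((-1 : ℝ) ^ (1 + tau s)) •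
    (Qmat U Λ (s 0) * (List.ofFn fun i : Fin k => Δ * Qmat U Λ (s i.succ)).prod)

set_option maxHeartbeats 2000000 in
/-- Perturbation bound for the principal subspace of a spiked covariance matrix: if
`λ_r ≥ (4+δ)‖Δ‖` and `Û` collects the top-`r` eigenvectors of `Σ + Δ`, then
`‖ÛÛᵀ − UUᵀ‖ ≤ 2‖Λ^{-1}UᵀΔU_⊥‖ + 6(4+δ)‖Δ‖‖UᵀΔU_⊥‖/(δλ_r²)`. -/
theorem principal_subspace_perturbation (p r : ℕ) (hr : 0 < r) (hrp : r ≤ p)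
    (U : Matrix (Fin p) (Fin r) ℝ) (hU : Uᵀ * U = 1)
    (Uperp : Matrix (Fin p) (Fin (p - r)) ℝ) (hUperp : Uperpᵀ * Uperp = 1)
    (horthU : Uᵀ * Uperp = 0)
    (hcomplU : U * Uᵀ + Uperp * Uperpᵀ = 1)
    (Λ : Fin r → ℝ) (hΛdec : ∀ i j : Fin r, i ≤ j → Λ j ≤ Λ i)
    (hΛpos : 0 < Λ ⟨r - 1, by omega⟩) (σ2 : ℝ)
    (Δ : Matrix (Fin p) (Fin p) ℝ) (hΔ : Δ.IsSymm)
    (δ : ℝ) (hδ : 0 < δ)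
    (hgap : (4 + δ) * specNorm Δ ≤ Λ ⟨r - 1, by omega⟩)
    (Uhat : Matrix (Fin p) (Fin r) ℝ) (Ucomp : Matrix (Fin p) (Fin (p - r)) ℝ)
    (D : Fin r → ℝ) (D' : Fin (p - r) → ℝ)
    (hUhat : Uhatᵀ * Uhat = 1) (hUcomp : Ucompᵀ * Ucomp = 1)
    (horth : Uhatᵀ * Ucomp = 0)
    (hcompl : Uhat * Uhatᵀ + Ucomp * Ucompᵀ = 1)
    (hdecomp : U * Matrix.diagonal Λ * Uᵀ + σ2 • (1 : Matrix (Fin p) (Fin p) ℝ) + Δ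
        = Uhat * Matrix.diagonal D * Uhatᵀ + Ucomp * Matrix.diagonal D' * Ucompᵀ)
    (htop : ∀ (i : Fin r) (j : Fin (p - r)), D' j ≤ D i) :
    specNorm (Uhat * Uhatᵀ - U * Uᵀ) ≤
      2 * specNorm (Matrix.diagonal (fun i => (Λ i)⁻¹) * (Uᵀ * Δ * Uperp)) +
        6 * (4 + δ) * specNorm Δ * specNorm (Uᵀ * Δ * Uperp) /
          (δ * (Λ ⟨r - 1, by omega⟩) ^ 2) := by
  simp only [specNorm_eq] at hgap ⊢
  -- scalar notation
  set s : ℝ := Λ ⟨r - 1, by omega⟩ with hsdef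
  set ε : ℝ := ‖Δ‖ with hεdef
  have hε0 : 0 ≤ ε := norm_nonneg _
  have hs : 0 < s := hΛpos
  have hΛlam : ∀ i, s ≤ Λ i := by
    intro i
    apply hΛdec i ⟨r - 1, by omega⟩
    rw [Fin.le_def]
    simp only []
    omega
  have hΛ0 : ∀ i, 0 ≤ Λ i := fun i => le_trans (le_of_lt hs) (hΛlam i)
  have hδε : 0 ≤ δ * ε := mul_nonneg hδ.le hε0
  have hμ : 0 < s - ε := by linarith only [hgap, hδε, hs, hε0]
  have hs2 : 0 < s - 2 * ε := by linarith only [hgap, hδε, hs, hε0]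
  -- Weyl bounds
  have hD : ∀ i, s + σ2 - ε ≤ D i :=
    weyl_lower hr U hU Λ s σ2 hΛlam Δ Uhat Ucomp D D' hcompl hdecomp htop
  have hD'u : ∀ j, D' j ≤ σ2 + ε :=
    weyl_upper U Uperp hUperp horthU Λ σ2 Δ Uhat Ucomp D D' hcompl hdecomp htop
  have hD'l : ∀ j, σ2 - ε ≤ D' j :=
    weyl_dlower U Λ σ2 hΛ0 Δ Uhat Ucomp D D' hUcomp horth hdecomp
  have hDpos : ∀ i, 0 < D i - σ2 := fun i => by have := hD i; linarith only [this, hμ]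
  -- matrices
  have hΔT : Δᵀ = Δ := hΔ
  have hUperpU : Uperpᵀ * U = 0 := by
    have := congrArg Matrix.transpose horthU
    simpa [Matrix.transpose_mul] using this
  have hUcUhat : Ucompᵀ * Uhat = 0 := by
    have := congrArg Matrix.transpose horth
    simpa [Matrix.transpose_mul] using this
  -- absorb lemmas
  have pUU : ∀ {k : ℕ} (X : Matrix (Fin r) (Fin k) ℝ), Uᵀ * (U * X) = X := by
    intro k X; rw [← Matrix.mul_assoc, hU, Matrix.one_mul]
  have pUperpU : ∀ {k : ℕ} (X : Matrix (Fin r) (Fin k) ℝ), Uperpᵀ * (U * X) = 0 := by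
    intro k X; rw [← Matrix.mul_assoc, hUperpU, Matrix.zero_mul]
  -- diagonal matrices
  set Λinv : Matrix (Fin r) (Fin r) ℝ := Matrix.diagonal (fun i => (Λ i)⁻¹) with hΛinvdef
  set R : Matrix (Fin r) (Fin r) ℝ := Matrix.diagonal (fun i => (D i - σ2)⁻¹) with hRdef
  set Dm : Matrix (Fin r) (Fin r) ℝ := Matrix.diagonal (fun i => D i - σ2) with hDmdef
  set Dm' : Matrix (Fin (p - r)) (Fin (p - r)) ℝ := Matrix.diagonal (fun j => D' j - σ2)
    with hDm'def
  have hΛinvΛ : Λinv * Matrix.diagonal Λ = 1 := by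
    rw [hΛinvdef, Matrix.diagonal_mul_diagonal]
    have : (fun i => (Λ i)⁻¹ * Λ i) = fun _ : Fin r => (1 : ℝ) := by
      funext i; exact inv_mul_cancel₀ (by nlinarith [hΛlam i])
    rw [this, Matrix.diagonal_one]
  have hDmR : Dm * R = 1 := by
    rw [hDmdef, hRdef, Matrix.diagonal_mul_diagonal]
    have : (fun i => (D i - σ2) * (D i - σ2)⁻¹) = fun _ : Fin r => (1 : ℝ) := by
      funext i; exact mul_inv_cancel₀ (ne_of_gt (hDpos i))
    rw [this, Matrix.diagonal_one]
  have hDmsub : Dm = Matrix.diagonal D - σ2 • (1 : Matrix (Fin r) (Fin r) ℝ) := by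
    rw [hDmdef]
    ext i j
    by_cases h : i = j <;> simp [Matrix.diagonal_apply, h, Matrix.one_apply]
  have hDm'sub : Dm' = Matrix.diagonal D' - σ2 • (1 : Matrix (Fin (p-r)) (Fin (p-r)) ℝ) := by
    rw [hDm'def]
    ext i j
    by_cases h : i = j <;> simp [Matrix.diagonal_apply, h, Matrix.one_apply]
  -- norms of pieces
  have nU : ‖U‖ ≤ 1 := norm_le_one_of_orth U hU
  have nUt : ‖Uᵀ‖ ≤ 1 := normT_le_one_of_orth U hU
  have nUperp : ‖Uperp‖ ≤ 1 := norm_le_one_of_orth Uperp hUperp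
  have nUperpt : ‖Uperpᵀ‖ ≤ 1 := normT_le_one_of_orth Uperp hUperp
  have nUhat : ‖Uhat‖ ≤ 1 := norm_le_one_of_orth Uhat hUhat
  have nUhatt : ‖Uhatᵀ‖ ≤ 1 := normT_le_one_of_orth Uhat hUhat
  have nUcomp : ‖Ucomp‖ ≤ 1 := norm_le_one_of_orth Ucomp hUcomp
  have nUcompt : ‖Ucompᵀ‖ ≤ 1 := normT_le_one_of_orth Ucomp hUcomp
  have nΛinv : ‖Λinv‖ ≤ s⁻¹ := by
    apply norm_diagonal_le _ _ (inv_nonneg.mpr hs.le)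
    intro i
    rw [abs_of_pos (inv_pos.mpr (lt_of_lt_of_le hs (hΛlam i)))]
    exact inv_anti₀ hs (hΛlam i)
  have nR : ‖R‖ ≤ (s - ε)⁻¹ := by
    apply norm_diagonal_le _ _ (inv_nonneg.mpr hμ.le)
    intro i
    rw [abs_of_pos (inv_pos.mpr (hDpos i))]
    apply inv_anti₀ hμ
    have := hD i; linarith
  have nDm' : ‖Dm'‖ ≤ ε := by
    apply norm_diagonal_le _ _ hε0
    intro j
    rw [abs_le]
    constructor
    · have := hD'l j; linarith
    · have := hD'u j; linarith
  -- sandwich identities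
  have e1 : σ2 • (Uperpᵀ * Uhat) + Uperpᵀ * (Δ * Uhat) = Uperpᵀ * (Uhat * Matrix.diagonal D) := by
    have h := congrArg (fun M => Uperpᵀ * (M * Uhat)) hdecomp
    simp only [Matrix.mul_add, Matrix.add_mul, Matrix.mul_assoc, smul_mul_assoc, mul_smul_comm, Matrix.smul_mul, Matrix.mul_smul, Matrix.one_mul, Matrix.mul_one, hUhat, hUcUhat, pUperpU,
      Matrix.mul_zero, Matrix.zero_mul, zero_add, add_zero] at h
    exact h
  have e2 : Matrix.diagonal Λ * (Uᵀ * Uhat) + σ2 • (Uᵀ * Uhat) + Uᵀ * (Δ * Uhat)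
      = Uᵀ * (Uhat * Matrix.diagonal D) := by
    have h := congrArg (fun M => Uᵀ * (M * Uhat)) hdecomp
    simp only [Matrix.mul_add, Matrix.add_mul, Matrix.mul_assoc, smul_mul_assoc, mul_smul_comm, Matrix.smul_mul, Matrix.mul_smul, Matrix.one_mul, Matrix.mul_one, hUhat, hUcUhat, pUU,
      Matrix.mul_zero, Matrix.zero_mul, zero_add, add_zero] at h
    exact h
  have e3 : Matrix.diagonal Λ * (Uᵀ * Ucomp) + σ2 • (Uᵀ * Ucomp) + Uᵀ * (Δ * Ucomp)
      = Uᵀ * (Ucomp * Matrix.diagonal D') := by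
    have h := congrArg (fun M => Uᵀ * (M * Ucomp)) hdecomp
    simp only [Matrix.mul_add, Matrix.add_mul, Matrix.mul_assoc, smul_mul_assoc, mul_smul_comm, Matrix.smul_mul, Matrix.mul_smul, Matrix.one_mul, Matrix.mul_one, hUcomp, horth, pUU,
      Matrix.mul_zero, Matrix.zero_mul, zero_add, add_zero] at h
    exact h
  have pΛ : ∀ {k : ℕ} (X : Matrix (Fin r) (Fin k) ℝ),
      Λinv * (Matrix.diagonal Λ * X) = X := by
    intro k X; rw [← Matrix.mul_assoc, hΛinvΛ, Matrix.one_mul]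
  -- derived equations
  have f1 : Uperpᵀ * (Uhat * Dm) = Uperpᵀ * (Δ * Uhat) := by
    rw [hDmsub]
    simp only [Matrix.mul_sub, Matrix.sub_mul, Matrix.mul_smul, Matrix.smul_mul,
      Matrix.mul_one, Matrix.mul_assoc]
    rw [← e1]; abel
  have f2 : Uᵀ * (Uhat * Dm) = Matrix.diagonal Λ * (Uᵀ * Uhat) + Uᵀ * (Δ * Uhat) := by
    rw [hDmsub]
    simp only [Matrix.mul_sub, Matrix.sub_mul, Matrix.mul_smul, Matrix.smul_mul,
      Matrix.mul_one, Matrix.mul_assoc]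
    rw [← e2]; abel
  have f6 : Uᵀ * (Ucomp * Dm') = Matrix.diagonal Λ * (Uᵀ * Ucomp) + Uᵀ * (Δ * Ucomp) := by
    rw [hDm'sub]
    simp only [Matrix.mul_sub, Matrix.sub_mul, Matrix.mul_smul, Matrix.smul_mul,
      Matrix.mul_one, Matrix.mul_assoc]
    rw [← e3]; abel
  have f3 : Uperpᵀ * Uhat = Uperpᵀ * (Δ * (Uhat * R)) := by
    have h := congrArg (fun M => M * R) f1
    simp only [Matrix.mul_assoc] at h
    rw [hDmR, Matrix.mul_one] at h
    exact h
  have f4 : Uᵀ * (Uhat * R) = Λinv * (Uᵀ * Uhat) - Λinv * (Uᵀ * (Δ * (Uhat * R))) := by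
    have h := congrArg (fun M => Λinv * (M * R)) f2
    simp only [Matrix.mul_add, Matrix.add_mul, Matrix.mul_assoc] at h
    rw [hDmR, Matrix.mul_one, pΛ] at h
    rw [h]; abel
  have f5 : Uhat = U * (Uᵀ * Uhat) + Uperp * (Uperpᵀ * Uhat) := by
    have h := congrArg (fun M => M * Uhat) hcomplU
    simp only [Matrix.add_mul, Matrix.mul_assoc, Matrix.one_mul] at h
    exact h.symm
  have f7 : Uᵀ * Ucomp = Λinv * (Uᵀ * (Ucomp * Dm')) - Λinv * (Uᵀ * (Δ * Ucomp)) := by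
    have h := congrArg (fun M => Λinv * M) f6
    simp only [Matrix.mul_add] at h
    rw [pΛ] at h
    rw [h]; abel
  have f8 : Ucomp = U * (Uᵀ * Ucomp) + Uperp * (Uperpᵀ * Ucomp) := by
    have h := congrArg (fun M => M * Ucomp) hcomplU
    simp only [Matrix.add_mul, Matrix.mul_assoc, Matrix.one_mul] at h
    exact h.symm
  -- master identity for B := Uperpᵀ * Uhat
  have hB3 : Uperpᵀ * Uhat = (Uperpᵀ * Δ * U * Λinv) * (Uᵀ * Uhat)
      - (Uperpᵀ * Δ * U * Λinv) * (Uᵀ * (Δ * (Uhat * R)))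
      + (Uperpᵀ * (Δ * Uperp)) * ((Uperpᵀ * Uhat) * R) := by
    calc Uperpᵀ * Uhat = Uperpᵀ * (Δ * (Uhat * R)) := f3
      _ = Uperpᵀ * (Δ * ((U * (Uᵀ * Uhat) + Uperp * (Uperpᵀ * Uhat)) * R)) := by rw [← f5]
      _ = Uperpᵀ * (Δ * (U * (Uᵀ * (Uhat * R)))) +
          Uperpᵀ * (Δ * (Uperp * (Uperpᵀ * (Uhat * R)))) := by
          simp only [Matrix.mul_add, Matrix.add_mul, Matrix.mul_assoc]
      _ = _ := by
          rw [f4]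
          simp only [Matrix.mul_sub, Matrix.sub_mul, Matrix.mul_add, Matrix.add_mul,
            Matrix.mul_assoc]
  -- master identity for C := Uᵀ * Ucomp
  have hC3 : Uᵀ * Ucomp = Λinv * ((Uᵀ * Ucomp) * Dm')
      - (Λinv * (Uᵀ * Δ * U)) * (Uᵀ * Ucomp)
      - (Λinv * (Uᵀ * Δ * Uperp)) * (Uperpᵀ * Ucomp) := by
    calc Uᵀ * Ucomp = Λinv * (Uᵀ * (Ucomp * Dm')) - Λinv * (Uᵀ * (Δ * Ucomp)) := f7
      _ = Λinv * (Uᵀ * (Ucomp * Dm')) -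
          Λinv * (Uᵀ * (Δ * (U * (Uᵀ * Ucomp) + Uperp * (Uperpᵀ * Ucomp)))) := by rw [← f8]
      _ = _ := by
          simp only [Matrix.mul_sub, Matrix.sub_mul, Matrix.mul_add, Matrix.add_mul,
            Matrix.mul_assoc]
          abel
  -- norm quantities
  set L : ℝ := ‖Λinv * (Uᵀ * Δ * Uperp)‖ with hLdef
  set εF : ℝ := ‖Uᵀ * Δ * Uperp‖ with hεFdef
  set nB : ℝ := ‖Uperpᵀ * Uhat‖ with hnBdef
  set nC : ℝ := ‖Uᵀ * Ucomp‖ with hnCdef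
  have hL0 : 0 ≤ L := norm_nonneg _
  have hεF0 : 0 ≤ εF := norm_nonneg _
  have hnB0 : 0 ≤ nB := norm_nonneg _
  have hnC0 : 0 ≤ nC := norm_nonneg _
  have hεF : εF ≤ ε := by
    rw [hεFdef, hεdef]
    exact norm_sandwich Uᵀ Δ Uperp nUt nUperp
  have hLs : L ≤ s⁻¹ * εF := by
    rw [hLdef]
    exact nmul _ _ nΛinv (le_refl _) hεF0
  have hLkey : ‖Uperpᵀ * Δ * U * Λinv‖ = L := by
    rw [hLdef, ← normT (Uperpᵀ * Δ * U * Λinv)]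
    congr 1
    simp only [Matrix.transpose_mul, Matrix.transpose_transpose, Matrix.diagonal_transpose,
      hΔT, hΛinvdef, Matrix.mul_assoc]
  -- bound nB
  have nG : ‖Uᵀ * (Δ * (Uhat * R))‖ ≤ ε * (s - ε)⁻¹ := by
    have h1 : Uᵀ * (Δ * (Uhat * R)) = (Uᵀ * Δ * Uhat) * R := by
      simp only [Matrix.mul_assoc]
    rw [h1]
    exact nmul _ _ (le_trans (norm_sandwich Uᵀ Δ Uhat nUt nUhat) (le_refl _)) nR
      (inv_nonneg.mpr hμ.le)
  have nE : ‖Uperpᵀ * (Δ * Uperp)‖ ≤ ε := by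
    have h1 : Uperpᵀ * (Δ * Uperp) = Uperpᵀ * Δ * Uperp := by simp only [Matrix.mul_assoc]
    rw [h1, hεdef]
    exact norm_sandwich Uperpᵀ Δ Uperp nUperpt nUperp
  have nA : ‖Uᵀ * Uhat‖ ≤ 1 := by
    have := nmul Uᵀ Uhat nUt nUhat zero_le_one
    simpa using this
  have nBR : ‖(Uperpᵀ * Uhat) * R‖ ≤ ‖Uperpᵀ * Uhat‖ * (s - ε)⁻¹ :=
    nmul _ _ (le_refl _) nR (inv_nonneg.mpr hμ.le)
  have hBle : ‖Uperpᵀ * Uhat‖ ≤ L * 1 + L * (ε * (s - ε)⁻¹)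
      + ε * (‖Uperpᵀ * Uhat‖ * (s - ε)⁻¹) := by
    have t1 : ‖(Uperpᵀ * Δ * U * Λinv) * (Uᵀ * Uhat)‖ ≤ L * 1 :=
      nmul _ _ (le_of_eq hLkey) nA zero_le_one
    have t2 : ‖(Uperpᵀ * Δ * U * Λinv) * (Uᵀ * (Δ * (Uhat * R)))‖ ≤ L * (ε * (s - ε)⁻¹) :=
      nmul _ _ (le_of_eq hLkey) nG (by positivity)
    have t3 : ‖(Uperpᵀ * (Δ * Uperp)) * ((Uperpᵀ * Uhat) * R)‖
        ≤ ε * (‖Uperpᵀ * Uhat‖ * (s - ε)⁻¹) := nmul _ _ nE nBR (by positivity)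
    calc ‖Uperpᵀ * Uhat‖
        = ‖(Uperpᵀ * Δ * U * Λinv) * (Uᵀ * Uhat)
            - (Uperpᵀ * Δ * U * Λinv) * (Uᵀ * (Δ * (Uhat * R)))
            + (Uperpᵀ * (Δ * Uperp)) * ((Uperpᵀ * Uhat) * R)‖ := by conv_lhs => rw [hB3]
      _ ≤ _ := le_trans (tri3 _ _ _) (add_le_add (add_le_add t1 t2) t3)
  have hBs : ‖Uperpᵀ * Uhat‖ * (s - 2 * ε) ≤ L * s := by
    have hne : s - ε ≠ 0 := ne_of_gt hμ
    have h := mul_le_mul_of_nonneg_right hBle hμ.le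
    have h2 : (L * 1 + L * (ε * (s - ε)⁻¹) + ε * (‖Uperpᵀ * Uhat‖ * (s - ε)⁻¹)) * (s - ε)
        = L * (s - ε) + L * ε + ε * ‖Uperpᵀ * Uhat‖ := by
      field_simp
    rw [h2] at h
    linarith only [h]
  -- bound nC
  have nBc : ‖Uperpᵀ * Ucomp‖ ≤ 1 := by
    have := nmul Uperpᵀ Ucomp nUperpt nUcomp zero_le_one
    simpa using this
  have nUDU : ‖Λinv * (Uᵀ * Δ * U)‖ ≤ s⁻¹ * ε := by
    refine nmul _ _ nΛinv ?_ hε0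
    rw [hεdef]; exact norm_sandwich Uᵀ Δ U nUt nU
  have hCle : ‖Uᵀ * Ucomp‖ ≤ s⁻¹ * (‖Uᵀ * Ucomp‖ * ε) + (s⁻¹ * ε) * ‖Uᵀ * Ucomp‖
      + L * 1 := by
    have t1 : ‖Λinv * ((Uᵀ * Ucomp) * Dm')‖ ≤ s⁻¹ * (‖Uᵀ * Ucomp‖ * ε) :=
      nmul _ _ nΛinv (nmul _ _ (le_refl _) nDm' hε0) (by positivity)
    have t2 : ‖(Λinv * (Uᵀ * Δ * U)) * (Uᵀ * Ucomp)‖ ≤ (s⁻¹ * ε) * ‖Uᵀ * Ucomp‖ :=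
      nmul _ _ nUDU (le_refl _) hnC0
    have t3 : ‖(Λinv * (Uᵀ * Δ * Uperp)) * (Uperpᵀ * Ucomp)‖ ≤ L * 1 :=
      nmul _ _ (le_refl _) nBc zero_le_one
    calc ‖Uᵀ * Ucomp‖
        = ‖Λinv * ((Uᵀ * Ucomp) * Dm') - (Λinv * (Uᵀ * Δ * U)) * (Uᵀ * Ucomp)
            - (Λinv * (Uᵀ * Δ * Uperp)) * (Uperpᵀ * Ucomp)‖ := by conv_lhs => rw [hC3]
      _ ≤ _ := le_trans (tri3' _ _ _) (add_le_add (add_le_add t1 t2) t3)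
  have hCs : ‖Uᵀ * Ucomp‖ * (s - 2 * ε) ≤ L * s := by
    have hne : s ≠ 0 := ne_of_gt hs
    have h := mul_le_mul_of_nonneg_right hCle hs.le
    have h2 : (s⁻¹ * (‖Uᵀ * Ucomp‖ * ε) + s⁻¹ * ε * ‖Uᵀ * Ucomp‖ + L * 1) * s
        = ‖Uᵀ * Ucomp‖ * ε + ε * ‖Uᵀ * Ucomp‖ + L * s := by
      field_simp
    rw [h2] at h
    linarith only [h]
  -- projection difference
  have h1c : Uperp * Uperpᵀ = 1 - U * Uᵀ := by rw [← hcomplU]; abel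
  have h2c : Ucomp * Ucompᵀ = 1 - Uhat * Uhatᵀ := by rw [← hcompl]; abel
  have key : Uhat * Uhatᵀ - U * Uᵀ
      = Uhat * ((Uhatᵀ * Uperp) * Uperpᵀ) - Ucomp * ((Ucompᵀ * U) * Uᵀ) := by
    rw [show Uhat * ((Uhatᵀ * Uperp) * Uperpᵀ) = (Uhat * Uhatᵀ) * (Uperp * Uperpᵀ) by
        simp only [Matrix.mul_assoc],
      show Ucomp * ((Ucompᵀ * U) * Uᵀ) = (Ucomp * Ucompᵀ) * (U * Uᵀ) by
        simp only [Matrix.mul_assoc],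
      h1c, h2c]
    noncomm_ring
  have hT : ‖Uhat * Uhatᵀ - U * Uᵀ‖ ≤ ‖Uperpᵀ * Uhat‖ + ‖Uᵀ * Ucomp‖ := by
    rw [key]
    refine le_trans (norm_sub_le _ _) ?_
    gcongr
    · have h1 : Uhat * ((Uhatᵀ * Uperp) * Uperpᵀ) = Uhat * (Uhatᵀ * Uperp) * Uperpᵀ := by
        simp only [Matrix.mul_assoc]
      rw [h1]
      refine le_trans (norm_sandwich Uhat _ Uperpᵀ nUhat nUperpt) ?_
      rw [show Uhatᵀ * Uperp = (Uperpᵀ * Uhat)ᵀ by simp [Matrix.transpose_mul], normT]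
    · have h1 : Ucomp * ((Ucompᵀ * U) * Uᵀ) = Ucomp * (Ucompᵀ * U) * Uᵀ := by
        simp only [Matrix.mul_assoc]
      rw [h1]
      refine le_trans (norm_sandwich Ucomp _ Uᵀ nUcomp nUt) ?_
      rw [show Ucompᵀ * U = (Uᵀ * Ucomp)ᵀ by simp [Matrix.transpose_mul], normT]
  -- final arithmetic
  have hLsε : L * s ≤ εF := by
    have hne : s ≠ 0 := ne_of_gt hs
    calc L * s ≤ (s⁻¹ * εF) * s := mul_le_mul_of_nonneg_right hLs hs.le
      _ = εF := by field_simp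
  have hTs : ‖Uhat * Uhatᵀ - U * Uᵀ‖ * (s - 2 * ε) ≤ 2 * L * s := by
    calc ‖Uhat * Uhatᵀ - U * Uᵀ‖ * (s - 2 * ε)
        ≤ (‖Uperpᵀ * Uhat‖ + ‖Uᵀ * Ucomp‖) * (s - 2 * ε) :=
          mul_le_mul_of_nonneg_right hT hs2.le
      _ = ‖Uperpᵀ * Uhat‖ * (s - 2 * ε) + ‖Uᵀ * Ucomp‖ * (s - 2 * ε) := by ring
      _ ≤ L * s + L * s := add_le_add hBs hCs
      _ = 2 * L * s := by ring
  have hXpos : (0:ℝ) < δ * s ^ 2 := by positivity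
  have hX : 6 * (4 + δ) * ε * εF / (δ * s ^ 2) * (δ * s ^ 2) = 6 * (4 + δ) * ε * εF :=
    div_mul_cancel₀ _ (ne_of_gt hXpos)
  have hpoly : 4 * L * ε * (δ * s ^ 2) ≤ 6 * (4 + δ) * ε * εF * (s - 2 * ε) := by
    have h1 : (4 + δ) * (s - 2 * ε) ≥ (2 + δ) * s := by linarith only [hgap]
    have h2 : 4 * δ * ε * s * (L * s) ≤ 4 * δ * ε * s * εF := by
      apply mul_le_mul_of_nonneg_left hLsε
        (mul_nonneg (mul_nonneg (mul_nonneg (by norm_num : (0:ℝ) ≤ 4) hδ.le) hε0) hs.le)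
    have h3 : 6 * ε * εF * ((2 + δ) * s) ≤ 6 * ε * εF * ((4 + δ) * (s - 2 * ε)) := by
      apply mul_le_mul_of_nonneg_left h1
        (mul_nonneg (mul_nonneg (by norm_num : (0:ℝ) ≤ 6) hε0) hεF0)
    have h7 : (0:ℝ) ≤ ε * εF * s := mul_nonneg (mul_nonneg hε0 hεF0) hs.le
    have h8 : (0:ℝ) ≤ δ * (ε * εF * s) := mul_nonneg hδ.le h7
    linarith only [h2, h3, h7, h8]
  have h4 : 4 * L * ε ≤ 6 * (4 + δ) * ε * εF / (δ * s ^ 2) * (s - 2 * ε) := by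
    rw [div_mul_eq_mul_div, le_div_iff₀ hXpos]
    linarith only [hpoly]
  have hfinal : ‖Uhat * Uhatᵀ - U * Uᵀ‖ * (s - 2 * ε) ≤
      (2 * L + 6 * (4 + δ) * ε * εF / (δ * s ^ 2)) * (s - 2 * ε) := by
    linarith only [hTs, h4]
  exact le_of_mul_le_mul_right hfinal hs2
end

section
/- In the proof of the DP Fano lemma: let p_{ji} denote the probability that, on data from P_j, the test h∘A outputs θ(P_i), and let β_j = Σ_{i≠j} p_{ji} be the type-I error at P_j. If p_{ji} ≥ e^{-4εt₀}(1 − β_i) − 2δ/(e^ε − 1) for all i ≠ j, then Σ_{j=1}^N β_j ≥ N(N−1)/((N−1) + e^{4εt₀}) · (1 − 2δe^{4εt₀}/(e^ε − 1)). -/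
/-- In the proof of the DP Fano lemma: if `p j i` denotes the probability that, on data
from `P_j`, the test outputs `θ(P_i)`, `β j = ∑_{i ≠ j} p j i`, and
`p j i ≥ e^{-4εt₀}(1 - β i) - 2δ/(e^ε - 1)` for all `i ≠ j`, then
`∑_j β j ≥ N(N-1)/((N-1) + e^{4εt₀}) · (1 - 2δe^{4εt₀}/(e^ε - 1))`. -/
theorem dp_fano_type_one_error_sum (N : ℕ) (hN : 2 ≤ N) (ε δ t₀ : ℝ)
    (hε : 0 < ε) (hδ0 : 0 ≤ δ) (hδ1 : δ < 1) (ht₀ : 0 < t₀)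
    (p : Fin N → Fin N → ℝ) (β : Fin N → ℝ)
    (hβ : ∀ j, β j = ∑ i ∈ Finset.univ.erase j, p j i)
    (hineq : ∀ i j : Fin N, i ≠ j →
      Real.exp (-(4 * ε * t₀)) * (1 - β i) - 2 * δ / (Real.exp ε - 1) ≤ p j i) :
    (N : ℝ) * ((N : ℝ) - 1) / (((N : ℝ) - 1) + Real.exp (4 * ε * t₀)) *
        (1 - 2 * δ * Real.exp (4 * ε * t₀) / (Real.exp ε - 1))
      ≤ ∑ j, β j := by
  have hE : 0 < Real.exp ε - 1 := by
    have := Real.add_one_lt_exp (ne_of_gt hε)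
    linarith
  set c : ℝ := 2 * δ / (Real.exp ε - 1) with hc
  set a : ℝ := Real.exp (4 * ε * t₀) with hadef
  have ha : 0 < a := Real.exp_pos _
  set S : ℝ := ∑ j, β j with hSdef
  have hNR : (2 : ℝ) ≤ (N : ℝ) := by exact_mod_cast hN
  have hexpneg : Real.exp (-(4 * ε * t₀)) = a⁻¹ := by
    rw [Real.exp_neg]
  have hstep : ∀ j : Fin N,
      (∑ i ∈ Finset.univ.erase j, (a⁻¹ * (1 - β i) - c)) ≤ β j := by
    intro j
    rw [hβ j]
    apply Finset.sum_le_sum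
    intro i hi
    have hij : i ≠ j := Finset.ne_of_mem_erase hi
    have h := hineq i j hij
    rwa [hexpneg] at h
  have hT : ∑ i : Fin N, (a⁻¹ * (1 - β i) - c) = a⁻¹ * ((N : ℝ) - S) - N * c := by
    rw [Finset.sum_sub_distrib, ← Finset.mul_sum, Finset.sum_sub_distrib]
    simp [Finset.card_univ, hSdef, mul_comm]
  have hmain : ((N : ℝ) - 1) * (a⁻¹ * ((N : ℝ) - S) - N * c) ≤ S := by
    have hsum : ∑ j : Fin N, (∑ i ∈ Finset.univ.erase j, (a⁻¹ * (1 - β i) - c)) ≤ S :=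
      Finset.sum_le_sum fun j _ => hstep j
    have heq : ∀ j : Fin N,
        (∑ i ∈ Finset.univ.erase j, (a⁻¹ * (1 - β i) - c))
          = (a⁻¹ * ((N : ℝ) - S) - N * c) - (a⁻¹ * (1 - β j) - c) := by
      intro j
      rw [Finset.sum_erase_eq_sub (Finset.mem_univ j), hT]
    rw [Finset.sum_congr rfl fun j _ => heq j] at hsum
    rw [Finset.sum_sub_distrib, Finset.sum_const, hT] at hsum
    simp only [Finset.card_univ, Fintype.card_fin, nsmul_eq_mul] at hsum
    nlinarith [hsum]
  have hane : a ≠ 0 := ne_of_gt ha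
  have hmain2 : ((N : ℝ) - 1) * (((N : ℝ) - S) - (N : ℝ) * c * a) ≤ S * a := by
    have h1 := mul_le_mul_of_nonneg_right hmain ha.le
    have hia : a⁻¹ * a = 1 := inv_mul_cancel₀ hane
    have h2 : ((N : ℝ) - 1) * (a⁻¹ * ((N : ℝ) - S) - N * c) * a
        = ((N : ℝ) - 1) * (((N : ℝ) - S) - (N : ℝ) * c * a) := by
      linear_combination (((N : ℝ) - 1) * ((N : ℝ) - S)) * hia
    linarith [h1, h2.symm.le]
  have hD : 0 < ((N : ℝ) - 1) + a := by linarith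
  have hca : 2 * δ * a / (Real.exp ε - 1) = c * a := by
    rw [hc]; ring
  rw [hca, div_mul_eq_mul_div, div_le_iff₀ hD]
  nlinarith [hmain2]
end
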